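/- arXiv:2412.17103 — 2 statements merged into one kernel-verified Lean document; each statement's English description precedes it below -/
import Mathlib

section
/- Let α be an ordinal and h ∈ Homeo(ω^{α+1}). If there exists a topological moiety A with h(A) ∩ A = ∅, then every homeomorphism of ω^{α+1} supported in a topological moiety can be expressed as a product of four conjugates of h and h^{-1}. -/
noncomputable section

open Ordinal Topology Set

/-- The ordinal `o` viewed as a topological space: the set of ordinals less than `o`,
equipped with the order topology (as a subspace of the ordinals with the order topology). -/
abbrev OrdT (o : Ordinal.{0}) := {x : Ordinal.{0} // x < o}

/-- The group of self-homeomorphisms of a topological space, under composition. -/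
instance homeoGroup (X : Type*) [TopologicalSpace X] : Group (X ≃ₜ X) where
  mul f g := g.trans f
  one := Homeomorph.refl X
  inv := Homeomorph.symm
  mul_assoc := by intros; rfl
  one_mul := by intro f; rfl
  mul_one := by intro f; rfl
  inv_mul_cancel := by
    intro f
    exact Homeomorph.ext fun x => f.symm_apply_apply x

/-- The set of maximal rank (Cantor–Bendixson rank `α+1`) elements of `ω^(α+1)`,
namely the ordinals of the form `ω^α · k` with `k ∈ ℕ`, `k ≠ 0`. -/
def maxRank (α : Ordinal.{0}) : Set (OrdT (Ordinal.omega0 ^ (α + 1))) :=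
  {x | ∃ k : ℕ, k ≠ 0 ∧ x.1 = Ordinal.omega0 ^ α * (k : Ordinal)}

/-- A topological moiety of `ω^(α+1)`: a clopen set such that both it and its
complement contain infinitely many maximal rank points. -/
def IsMoiety (α : Ordinal.{0}) (A : Set (OrdT (Ordinal.omega0 ^ (α + 1)))) : Prop :=
  IsClopen A ∧ (A ∩ maxRank α).Infinite ∧ (Aᶜ ∩ maxRank α).Infinite

/-! ### Auxiliary development -/

namespace And14

instance (o : Ordinal.{0}) : OrderTopology (OrdT o) :=
  orderTopology_of_ordConnected (t := Set.Iio o)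

variable {α : Ordinal.{0}}

/-- The ambient space. -/
abbrev Z (α : Ordinal.{0}) := OrdT (Ordinal.omega0 ^ (α + 1))

/-- block length -/
abbrev W (α : Ordinal.{0}) : Ordinal.{0} := Ordinal.omega0 ^ α

lemma W_pos : 0 < W α := opow_pos _ omega0_pos

lemma Lam_limit : Order.IsSuccLimit (omega0 ^ (α + 1)) :=
  isSuccLimit_opow_left isSuccLimit_omega0 (by
    intro h
    exact (Ordinal.succ_ne_zero α) (by rwa [← add_one_eq_succ]))

lemma prin {a b : Ordinal} (ha : a < omega0 ^ (α + 1)) (hb : b < omega0 ^ (α + 1)) :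
    a + b < omega0 ^ (α + 1) := principal_add_omega0_opow (α + 1) ha hb

lemma W_lt_Lam : W α < omega0 ^ (α + 1) :=
  (opow_lt_opow_iff_right one_lt_omega0).2 (by rw [add_one_eq_succ]; exact Order.lt_succ α)

lemma W_mul_nat_lt (k : ℕ) : W α * k < omega0 ^ (α + 1) := by
  rw [add_one_eq_succ, opow_succ]
  exact (mul_lt_mul_iff_of_pos_left W_pos).2 (nat_lt_omega0 k)

lemma add_W_of_block {k : ℕ} {c : Ordinal} (h1 : W α * k ≤ c) (h2 : c < W α * (k + 1)) :
    c + W α = W α * (k + 1) := by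
  have hc : c = W α * k + (c - W α * k) := (Ordinal.add_sub_cancel_of_le h1).symm
  have hr : c - W α * k < W α := by
    by_contra hge
    push_neg at hge
    have : W α * k + W α ≤ c := by
      calc W α * k + W α ≤ W α * k + (c - W α * k) := add_le_add_right hge _
      _ = c := (Ordinal.add_sub_cancel_of_le h1)
    rw [show ((k : Ordinal) + 1) = Order.succ (k : Ordinal) from rfl, mul_succ] at h2
    exact absurd h2 (not_lt.2 this)
  calc c + W α = W α * k + ((c - W α * k) + W α) := by rw [← add_assoc, ← hc]
  _ = W α * k + W α := by rw [Ordinal.add_omega0_opow hr]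
  _ = W α * (k + 1) := by rw [show ((k : Ordinal) + 1) = Order.succ (k : Ordinal) from rfl, mul_succ]


/-! ### Points and intervals in `Z α` -/

lemma olt_add_one_iff {x b : Ordinal} : x < b + 1 ↔ x ≤ b := by
  rw [add_one_eq_succ]; exact Order.lt_succ_iff

lemma oadd_one_le_iff {a x : Ordinal} : a + 1 ≤ x ↔ a < x := by
  rw [add_one_eq_succ]; exact Order.succ_le_iff

lemma zsucc_lt {x : Ordinal} (hx : x < omega0 ^ (α + 1)) : x + 1 < omega0 ^ (α + 1) := by
  rw [add_one_eq_succ]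
  exact Lam_limit.succ_lt hx

lemma zero_lt_Lam : (0:Ordinal) < omega0 ^ (α + 1) := opow_pos _ omega0_pos

/-- `Ioc` intervals are open in `Z α`. -/
lemma isOpen_IocZ (a b : Z α) : IsOpen (Ioc a b) := by
  have : Ioc a b = Iio (⟨b.1 + 1, zsucc_lt b.2⟩ : Z α) ∩ Ioi a := by
    ext x
    simp only [mem_Ioc, mem_inter_iff, mem_Iio, mem_Ioi]
    constructor
    · rintro ⟨h1, h2⟩
      exact ⟨show x.1 < b.1 + 1 from olt_add_one_iff.2 h2, h1⟩
    · rintro ⟨h1, h2⟩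
      exact ⟨h2, show x.1 ≤ b.1 from olt_add_one_iff.1 h1⟩
  rw [this]
  exact (isOpen_Iio).inter isOpen_Ioi

lemma isClosed_IocZ (a b : Z α) : IsClosed (Ioc a b) := by
  have : Ioc a b = Icc (⟨a.1 + 1, zsucc_lt a.2⟩ : Z α) b := by
    ext x
    simp only [mem_Ioc, mem_Icc]
    constructor
    · rintro ⟨h1, h2⟩
      exact ⟨show a.1 + 1 ≤ x.1 from oadd_one_le_iff.2 h1, h2⟩
    · rintro ⟨h1, h2⟩
      exact ⟨show (a:Z α) < x from oadd_one_le_iff.1 h1, h2⟩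
  rw [this]
  exact isClosed_Icc

lemma isClopen_IocZ (a b : Z α) : IsClopen (Ioc a b) := ⟨isClosed_IocZ a b, isOpen_IocZ a b⟩

/-- successor points are isolated -/
lemma isClopen_singleton_succ (c : Ordinal) (h : c + 1 < omega0 ^ (α + 1)) :
    IsClopen ({(⟨c + 1, h⟩ : Z α)} : Set (Z α)) := by
  have hc : c < omega0 ^ (α + 1) := lt_of_le_of_lt le_self_add h
  have : ({(⟨c + 1, h⟩ : Z α)} : Set (Z α)) = Ioc (⟨c, hc⟩ : Z α) ⟨c + 1, h⟩ := by
    ext x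
    simp only [mem_singleton_iff, mem_Ioc]
    constructor
    · rintro rfl
      exact ⟨show c < c + 1 from olt_add_one_iff.2 le_rfl, le_rfl⟩
    · rintro ⟨h1, h2⟩
      exact Subtype.ext (le_antisymm h2 (oadd_one_le_iff.2 h1))
  rw [this]
  exact isClopen_IocZ _ _

lemma isClopen_singleton_zero :
    IsClopen ({(⟨0, zero_lt_Lam⟩ : Z α)} : Set (Z α)) := by
  refine ⟨isClosed_singleton, ?_⟩
  have : ({(⟨0, zero_lt_Lam⟩ : Z α)} : Set (Z α))
      = Iio (⟨1, by simpa using zsucc_lt (α := α) (x := 0) zero_lt_Lam⟩ : Z α) := by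
    ext x
    simp only [mem_singleton_iff, mem_Iio]
    constructor
    · rintro rfl
      exact show (0:Ordinal) < 1 by simp
    · intro h1
      exact Subtype.ext (Ordinal.lt_one_iff_zero.1 h1)
  rw [this]
  exact isOpen_Iio


/-! ### Standard pieces -/

/-- A standard piece: a half-open interval of length `ω^α`. -/
structure Piece (α : Ordinal.{0}) where
  c : Ordinal
  hp : c + W α < Ordinal.omega0 ^ (α + 1)

namespace Piece

variable (P Q : Piece α)

lemma hc : P.c < omega0 ^ (α + 1) := lt_of_le_of_lt le_self_add P.hp

/-- bottom endpoint (excluded) -/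
def bot : Z α := ⟨P.c, P.hc⟩
/-- top endpoint (included) -/
def top : Z α := ⟨P.c + W α, P.hp⟩

/-- the underlying set -/
def set : Set (Z α) := Ioc P.bot P.top

lemma mem_iff {x : Z α} : x ∈ P.set ↔ P.c < x.1 ∧ x.1 ≤ P.c + W α := Iff.rfl

lemma isClopen_set : IsClopen P.set := isClopen_IocZ _ _

/-- translation map between standard pieces -/
def tr : Z α → Z α := fun x =>
  ⟨Q.c + (x.1 - P.c), prin Q.hc (lt_of_le_of_lt (Ordinal.sub_le_self _ _) x.2)⟩

lemma tr_mem {x : Z α} (hx : x ∈ P.set) : P.tr Q x ∈ Q.set := by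
  obtain ⟨h1, h2⟩ := hx
  have hpos : 0 < x.1 - P.c := by
    rw [pos_iff_ne_zero]
    intro h0
    exact absurd (Ordinal.sub_eq_zero_iff_le.1 h0) (not_le.2 h1)
  constructor
  · show Q.c < Q.c + (x.1 - P.c)
    conv_lhs => rw [← add_zero Q.c]
    exact (add_lt_add_iff_left Q.c).2 hpos
  · show Q.c + (x.1 - P.c) ≤ Q.c + W α
    exact add_le_add_right (Ordinal.sub_le.2 h2) Q.c

lemma tr_tr {x : Z α} (hx : x ∈ P.set) : Q.tr P (P.tr Q x) = x := by
  obtain ⟨h1, h2⟩ := P.mem_iff.1 hx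
  apply Subtype.ext
  show P.c + ((Q.c + (x.1 - P.c)) - Q.c) = x.1
  rw [Ordinal.add_sub_cancel, Ordinal.add_sub_cancel_of_le h1.le]

lemma tr_image : P.tr Q '' P.set = Q.set := by
  ext y
  constructor
  · rintro ⟨x, hx, rfl⟩
    exact P.tr_mem Q hx
  · intro hy
    exact ⟨Q.tr P y, Q.tr_mem P hy, Q.tr_tr P hy⟩

/-- the translation as an order isomorphism between the pieces -/
def trIso : ↥P.set ≃o ↥Q.set where
  toFun x := ⟨P.tr Q x.1, P.tr_mem Q x.2⟩
  invFun y := ⟨Q.tr P y.1, Q.tr_mem P y.2⟩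
  left_inv x := Subtype.ext (P.tr_tr Q x.2)
  right_inv y := Subtype.ext (Q.tr_tr P y.2)
  map_rel_iff' := by
    rintro ⟨x, hx⟩ ⟨y, hy⟩
    obtain ⟨hx1, _⟩ := P.mem_iff.1 hx
    obtain ⟨hy1, _⟩ := P.mem_iff.1 hy
    show (P.tr Q x ≤ P.tr Q y) ↔ _
    have h : P.tr Q x ≤ P.tr Q y ↔ (x.1 - P.c) ≤ (y.1 - P.c) := by
      show Q.c + (x.1 - P.c) ≤ Q.c + (y.1 - P.c) ↔ _
      exact add_le_add_iff_left Q.c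
    rw [h]
    constructor
    · intro hle
      show x.1 ≤ y.1
      calc x.1 = P.c + (x.1 - P.c) := (Ordinal.add_sub_cancel_of_le hx1.le).symm
      _ ≤ P.c + (y.1 - P.c) := add_le_add_right hle P.c
      _ = y.1 := Ordinal.add_sub_cancel_of_le hy1.le
    · intro (hle : x.1 ≤ y.1)
      refine Ordinal.sub_le.2 ?_
      rw [Ordinal.add_sub_cancel_of_le hy1.le]
      exact hle

lemma tr_contOn : ContinuousOn (P.tr Q) P.set := by
  haveI : OrdConnected P.set := Set.ordConnected_Ioc
  haveI : OrdConnected Q.set := Set.ordConnected_Ioc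
  rw [continuousOn_iff_continuous_restrict]
  have : P.set.domRestrict (P.tr Q) = Subtype.val ∘ (P.trIso Q).toHomeomorph := rfl
  rw [this]
  exact continuous_subtype_val.comp (P.trIso Q).toHomeomorph.continuous

lemma tr_image_clopen {S : Set (Z α)} (hS : IsClopen S) :
    IsClopen (P.tr Q '' (S ∩ P.set)) := by
  have heq : P.tr Q '' (S ∩ P.set) = Q.set ∩ (Q.tr P) ⁻¹' (S ∩ P.set) := by
    ext y
    constructor
    · rintro ⟨x, ⟨hxS, hxP⟩, rfl⟩
      refine ⟨P.tr_mem Q hxP, ?_⟩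
      show Q.tr P (P.tr Q x) ∈ S ∩ P.set
      rw [P.tr_tr Q hxP]
      exact ⟨hxS, hxP⟩
    · rintro ⟨hyQ, hy⟩
      exact ⟨Q.tr P y, hy, Q.tr_tr P hyQ⟩
  rw [heq]
  constructor
  · exact (Q.tr_contOn P).preimage_isClosed_of_isClosed Q.isClopen_set.1
      ((hS.1).inter P.isClopen_set.1)
  · exact (Q.tr_contOn P).isOpen_inter_preimage Q.isClopen_set.2
      ((hS.2).inter P.isClopen_set.2)

end Piece

/-! ### Blocks -/

/-- the `k`-th block, as a piece -/
def Qblk (α : Ordinal.{0}) (k : ℕ) : Piece α :=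
  ⟨W α * k, by
    have := W_mul_nat_lt (α := α) (k + 1)
    rwa [Nat.cast_add, Nat.cast_one, mul_add, mul_one] at this⟩

lemma Wmul_succ (k : ℕ) : W α * ((k + 1 : ℕ) : Ordinal) = W α * k + W α := by
  push_cast
  rw [mul_add, mul_one]

lemma mem_Qblk_iff {x : Z α} {k : ℕ} :
    x ∈ (Qblk α k).set ↔ W α * k < x.1 ∧ x.1 ≤ W α * k + W α := Iff.rfl

/-- every nonzero point lies in a block -/
lemma exists_block (x : Z α) (hx : x.1 ≠ 0) : ∃ k : ℕ, x ∈ (Qblk α k).set := by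
  have hxlt : x.1 < W α * omega0 :=
    lt_of_lt_of_eq x.2 (by rw [add_one_eq_succ, opow_succ])
  obtain ⟨c', hc', hlt⟩ := (lt_mul_iff_of_isSuccLimit isSuccLimit_omega0).1 hxlt
  obtain ⟨n, rfl⟩ := lt_omega0.1 hc'
  have hP : ∃ m : ℕ, x.1 ≤ W α * m := ⟨n, hlt.le⟩
  classical
  let m := Nat.find hP
  have hm : x.1 ≤ W α * m := Nat.find_spec hP
  have hm0 : m ≠ 0 := by
    intro h0
    rw [h0] at hm
    simp only [Nat.cast_zero, mul_zero, nonpos_iff_eq_zero] at hm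
    exact hx hm
  refine ⟨m - 1, ?_⟩
  rw [mem_Qblk_iff, ← Wmul_succ]
  constructor
  · have := Nat.find_min hP (m := m - 1) (Nat.sub_lt (Nat.pos_of_ne_zero hm0) one_pos)
    exact not_le.1 this
  · rwa [Nat.sub_add_cancel (Nat.one_le_iff_ne_zero.2 hm0)]

lemma zero_notin_Qblk {k : ℕ} {x : Z α} (hx : x ∈ (Qblk α k).set) : x.1 ≠ 0 := by
  intro h0
  have h1 := (mem_Qblk_iff.1 hx).1
  rw [h0] at h1
  exact not_lt_zero h1

lemma Qblk_lt_aux {k l : ℕ} {x : Z α} (hkl : k < l) (hk : x ∈ (Qblk α k).set)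
    (hl : x ∈ (Qblk α l).set) : False := by
  have h1 := (mem_Qblk_iff.1 hk).2
  have h2 := (mem_Qblk_iff.1 hl).1
  rw [← Wmul_succ] at h1
  have h3 : W α * ((k + 1 : ℕ) : Ordinal) ≤ W α * l := mul_le_mul_right (by exact_mod_cast hkl) _
  exact absurd (lt_of_le_of_lt (h1.trans h3) h2) (lt_irrefl _)

lemma Qblk_unique {k l : ℕ} {x : Z α} (hk : x ∈ (Qblk α k).set) (hl : x ∈ (Qblk α l).set) :
    k = l := by
  rcases lt_trichotomy k l with hkl | he | hlk
  · exact absurd (Qblk_lt_aux hkl hk hl) (fun h => h)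
  · exact he
  · exact absurd (Qblk_lt_aux hlk hl hk) (fun h => h)

/-- a piece sits inside the block of its top point when `W α * k ≤ c < W α * (k+1) = c + W α`. -/
lemma piece_subset_block (P : Piece α) (k : ℕ) (h1 : W α * k ≤ P.c)
    (h2 : P.c + W α = W α * ((k + 1 : ℕ) : Ordinal)) : P.set ⊆ (Qblk α k).set := by
  intro x hx
  rw [Piece.mem_iff] at hx
  rw [mem_Qblk_iff, ← Wmul_succ]
  exact ⟨lt_of_le_of_lt h1 hx.1, by rw [← h2]; exact hx.2⟩


/-! ### The gluing lemma -/

theorem glue {ι : Type} (p q : ι → Set (Z α)) (F G : ι → Z α → Z α)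
    (hpo : ∀ i, IsOpen (p i)) (hqo : ∀ i, IsOpen (q i))
    (hpu : ∀ {i j x}, x ∈ p i → x ∈ p j → i = j)
    (hqu : ∀ {i j y}, y ∈ q i → y ∈ q j → i = j)
    (hpc : ∀ x, ∃ i, x ∈ p i) (hqc : ∀ y, ∃ i, y ∈ q i)
    (hF : ∀ i, MapsTo (F i) (p i) (q i)) (hG : ∀ i, MapsTo (G i) (q i) (p i))
    (hGF : ∀ i, ∀ x ∈ p i, G i (F i x) = x) (hFG : ∀ i, ∀ y ∈ q i, F i (G i y) = y)
    (hFc : ∀ i, ContinuousOn (F i) (p i)) (hGc : ∀ i, ContinuousOn (G i) (q i)) :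
    ∃ e : Z α ≃ₜ Z α, (∀ i, ∀ x ∈ p i, e x = F i x) ∧ (∀ i, ∀ y ∈ q i, e.symm y = G i y) := by
  classical
  set tf : Z α → Z α := fun x => F (hpc x).choose x with htf
  set tg : Z α → Z α := fun y => G (hqc y).choose y with htg
  have key1 : ∀ i, ∀ x ∈ p i, tf x = F i x := by
    intro i x hx
    have hs := (hpc x).choose_spec
    show F (hpc x).choose x = F i x
    rw [hpu hs hx]
  have key2 : ∀ i, ∀ y ∈ q i, tg y = G i y := by
    intro i y hy
    have hs := (hqc y).choose_spec
    show G (hqc y).choose y = G i y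
    rw [hqu hs hy]
  have hleft : ∀ x, tg (tf x) = x := by
    intro x
    obtain ⟨i, hx⟩ := hpc x
    rw [key1 i x hx, key2 i _ (hF i hx)]
    exact hGF i x hx
  have hright : ∀ y, tf (tg y) = y := by
    intro y
    obtain ⟨i, hy⟩ := hqc y
    rw [key2 i y hy, key1 i _ (hG i hy)]
    exact hFG i y hy
  have hcf : Continuous tf := by
    rw [continuous_iff_continuousAt]
    intro x
    obtain ⟨i, hx⟩ := hpc x
    have h1 : ContinuousAt (F i) x := (hFc i).continuousAt ((hpo i).mem_nhds hx)
    apply h1.congr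
    filter_upwards [(hpo i).mem_nhds hx] with y hy
    exact (key1 i y hy).symm
  have hcg : Continuous tg := by
    rw [continuous_iff_continuousAt]
    intro y
    obtain ⟨i, hy⟩ := hqc y
    have h1 : ContinuousAt (G i) y := (hGc i).continuousAt ((hqo i).mem_nhds hy)
    apply h1.congr
    filter_upwards [(hqo i).mem_nhds hy] with z hz
    exact (key2 i z hz).symm
  refine ⟨⟨⟨tf, tg, hleft, hright⟩, hcf, hcg⟩, key1, key2⟩

/-! ### Closedness of block-wise unions -/

lemma isClosed_iUnion_blockwise {ι : Type} (E : ι → Set (Z α)) (κ : ι → ℕ)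
    (hsub : ∀ i, E i ⊆ (Qblk α (κ i)).set) (hinj : Function.Injective κ)
    (hcl : ∀ i, IsClosed (E i)) : IsClosed (⋃ i, E i) := by
  classical
  rw [← isOpen_compl_iff]
  rw [isOpen_iff_forall_mem_open]
  intro x hx
  by_cases hx0 : x.1 = 0
  · refine ⟨{(⟨0, zero_lt_Lam⟩ : Z α)}, ?_, isClopen_singleton_zero.2, ?_⟩
    · rintro y hy
      rw [mem_singleton_iff] at hy
      subst hy
      intro hmem
      rw [mem_iUnion] at hmem
      obtain ⟨i, hi⟩ := hmem
      exact zero_notin_Qblk (hsub i hi) rfl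
    · rw [mem_singleton_iff]
      exact Subtype.ext hx0
  · obtain ⟨k, hk⟩ := exists_block x hx0
    by_cases hex : ∃ i, κ i = k
    · obtain ⟨i0, hi0⟩ := hex
      refine ⟨(Qblk α k).set ∩ (E i0)ᶜ, ?_, ((Qblk α k).isClopen_set.2).inter (hcl i0).isOpen_compl, ?_⟩
      · rintro y ⟨hyk, hyE⟩
        intro hmem
        rw [mem_iUnion] at hmem
        obtain ⟨i, hi⟩ := hmem
        have hyi : y ∈ (Qblk α (κ i)).set := hsub i hi
        have : κ i = k := Qblk_unique hyi hyk
        have : i = i0 := hinj (this.trans hi0.symm)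
        subst this
        exact hyE hi
      · refine ⟨hk, ?_⟩
        intro hxE
        exact hx (mem_iUnion.2 ⟨i0, hxE⟩)
    · refine ⟨(Qblk α k).set, ?_, (Qblk α k).isClopen_set.2, hk⟩
      rintro y hyk
      intro hmem
      rw [mem_iUnion] at hmem
      obtain ⟨i, hi⟩ := hmem
      have hyi : y ∈ (Qblk α (κ i)).set := hsub i hi
      exact hex ⟨i, Qblk_unique hyi hyk⟩


/-! ### Top points and their enumeration -/

/-- the `k`-th maximal-rank point `ω^α * (k+1)` -/
def ztop (α : Ordinal.{0}) (k : ℕ) : Z α := ⟨W α * ((k + 1 : ℕ) : Ordinal), W_mul_nat_lt _⟩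

lemma ztop_mem_maxRank (k : ℕ) : ztop α k ∈ maxRank α := ⟨k + 1, Nat.succ_ne_zero k, rfl⟩

lemma tops_infinite {M : Set (Z α)} (hM : (M ∩ maxRank α).Infinite) :
    {k : ℕ | ztop α k ∈ M}.Infinite := by
  have hsub : M ∩ maxRank α ⊆ (fun k => ztop α k) '' {k : ℕ | ztop α k ∈ M} := by
    rintro x ⟨hxM, j, hj0, hj⟩
    refine ⟨j - 1, ?_, ?_⟩
    · show ztop α (j-1) ∈ M
      have heq : ztop α (j - 1) = x := by
        apply Subtype.ext
        show W α * ((j - 1 + 1 : ℕ) : Ordinal) = x.1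
        rw [Nat.sub_add_cancel (Nat.one_le_iff_ne_zero.2 hj0), hj]
      rw [heq]
      exact hxM
    · apply Subtype.ext
      show W α * ((j - 1 + 1 : ℕ) : Ordinal) = x.1
      rw [Nat.sub_add_cancel (Nat.one_le_iff_ne_zero.2 hj0), hj]
  exact Set.Infinite.of_image _ (hM.mono hsub)

/-- two infinite subsets of `ℕ` contain interleaved disjoint infinite selections -/
lemma disjoint_selections {S T : Set ℕ} (hS : S.Infinite) (hT : T.Infinite) :
    ∃ φ ψ : ℕ → ℕ, (∀ n, φ n ∈ S) ∧ (∀ n, ψ n ∈ T) ∧ StrictMono φ ∧ StrictMono ψ ∧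
      (∀ m n, φ m ≠ ψ n) := by
  classical
  let next : ℕ → ℕ × ℕ := fun b =>
    let a := (hS.exists_gt b).choose
    (a, (hT.exists_gt a).choose)
  let r : ℕ → ℕ × ℕ := fun n => Nat.rec (next 0) (fun _ ih => next ih.2) n
  have hr0 : r 0 = next 0 := rfl
  have hrs : ∀ n, r (n + 1) = next (r n).2 := fun n => rfl
  have hnext : ∀ b, (next b).1 ∈ S ∧ b < (next b).1 ∧ (next b).2 ∈ T ∧ (next b).1 < (next b).2 := by
    intro b
    obtain ⟨h1, h2⟩ := (hS.exists_gt b).choose_spec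
    obtain ⟨h3, h4⟩ := (hT.exists_gt (hS.exists_gt b).choose).choose_spec
    exact ⟨h1, h2, h3, h4⟩
  have hmemS : ∀ n, (r n).1 ∈ S := by
    intro n
    cases n with
    | zero => exact (hnext 0).1
    | succ m => rw [hrs]; exact (hnext _).1
  have hmemT : ∀ n, (r n).2 ∈ T := by
    intro n
    cases n with
    | zero => exact (hnext 0).2.2.1
    | succ m => rw [hrs]; exact (hnext _).2.2.1
  have hlt1 : ∀ n, (r n).1 < (r n).2 := by
    intro n
    cases n with
    | zero => exact (hnext 0).2.2.2
    | succ m => rw [hrs]; exact (hnext _).2.2.2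
  have hlt2 : ∀ n, (r n).2 < (r (n + 1)).1 := by
    intro n
    rw [hrs]
    exact (hnext _).2.1
  refine ⟨fun n => (r n).1, fun n => (r n).2, hmemS, hmemT, ?_, ?_, ?_⟩
  · apply strictMono_nat_of_lt_succ
    intro n
    exact (hlt1 n).trans (hlt2 n)
  · apply strictMono_nat_of_lt_succ
    intro n
    exact (hlt2 n).trans (hlt1 (n + 1))
  · have hmono1 : StrictMono (fun n => (r n).1) :=
      strictMono_nat_of_lt_succ (fun n => (hlt1 n).trans (hlt2 n))
    intro m n
    rcases le_or_gt m n with hmn | hnm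
    · exact ne_of_lt (lt_of_le_of_lt (hmono1.monotone hmn) (hlt1 n))
    · have : n + 1 ≤ m := hnm
      exact ne_of_gt (lt_of_lt_of_le (hlt2 n) (hmono1.monotone this))

/-- choose a standard piece inside an open set at a top point -/
lemma piece_in_open {U : Set (Z α)} (hU : IsOpen U) {k : ℕ} (hk : ztop α k ∈ U) :
    ∃ P : Piece α, P.set ⊆ U ∧ P.set ⊆ (Qblk α k).set ∧ ztop α k ∈ P.set := by
  have hWk : W α * (k : Ordinal) < W α * ((k + 1 : ℕ) : Ordinal) := by
    rw [Wmul_succ]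
    conv_lhs => rw [← add_zero (W α * k)]
    exact (add_lt_add_iff_left _).2 W_pos
  have hbot : (⟨W α * (k : Ordinal), W_mul_nat_lt k⟩ : Z α) < ztop α k := hWk
  obtain ⟨l, hl, hsub⟩ := exists_Ioc_subset_of_mem_nhds (hU.mem_nhds hk) ⟨_, hbot⟩
  set c : Ordinal := max l.1 (W α * k) with hc
  have hclt : c < W α * ((k + 1 : ℕ) : Ordinal) := max_lt hl hWk
  have hclt' : c < W α * (k : Ordinal) + W α := by rwa [← Wmul_succ]
  have hcW : c + W α = W α * ((k + 1 : ℕ) : Ordinal) := by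
    have h := add_W_of_block (le_max_right l.1 (W α * k)) (k := k) (by
      rw [show W α * ((k : Ordinal) + 1) = W α * (k : Ordinal) + W α by rw [mul_add, mul_one]]
      exact hclt')
    rw [Wmul_succ]
    rw [show W α * ((k : Ordinal) + 1) = W α * (k : Ordinal) + W α by rw [mul_add, mul_one]] at h
    exact h
  have hPp : c + W α < omega0 ^ (α + 1) := by rw [hcW]; exact W_mul_nat_lt _
  refine ⟨⟨c, hPp⟩, ?_, ?_, ?_⟩
  · intro x hx
    obtain ⟨h1, h2⟩ := (Piece.mem_iff _).1 hx
    apply hsub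
    constructor
    · exact Subtype.coe_lt_coe.1 (lt_of_le_of_lt (le_max_left _ _) h1)
    · show x.1 ≤ (ztop α k).1
      show x.1 ≤ W α * ((k + 1 : ℕ) : Ordinal)
      rw [← hcW]
      exact h2
  · exact piece_subset_block _ k (le_max_right _ _) hcW
  · constructor
    · exact hclt
    · show (ztop α k).1 ≤ c + W α
      rw [hcW]
      exact le_rfl


/-! ### Homeomorphism group helpers -/

section HomeoHelpers

variable {X : Type*} [TopologicalSpace X]

lemma hmul_apply (f g : X ≃ₜ X) (x : X) : (f * g) x = f (g x) := rfl

lemma hinv_apply (f : X ≃ₜ X) (x : X) : (f⁻¹) x = f.symm x := rfl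

lemma hone_apply (x : X) : (1 : X ≃ₜ X) x = x := rfl

/-- the set of moved points is invariant -/
lemma moved_mem {g : X ≃ₜ X} {x : X} (hx : g x ≠ x) : g (g x) ≠ g x := by
  intro h
  exact hx (g.injective h)

lemma moved_inv {g : X ≃ₜ X} {x : X} (hx : g.symm x ≠ x) : g x ≠ x := by
  intro h
  apply hx
  conv_lhs => rw [← h]
  rw [g.symm_apply_apply]

/-- conjugation transports moved points -/
lemma moved_conj {u g : X ≃ₜ X} {x : X} (hx : (u * g * u⁻¹) x ≠ x) :
    g (u.symm x) ≠ u.symm x := by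
  intro h
  apply hx
  show u (g (u.symm x)) = x
  rw [h, u.apply_symm_apply]

lemma commute_of_disjoint_moved {p q : X ≃ₜ X} {S S' : Set X}
    (hp : ∀ x, p x ≠ x → x ∈ S) (hq : ∀ x, q x ≠ x → x ∈ S')
    (hdisj : ∀ x, x ∈ S → x ∈ S' → False) : p * q = q * p := by
  apply Homeomorph.ext
  intro x
  show p (q x) = q (p x)
  by_cases hqx : q x = x
  · by_cases hpx : p x = x
    · rw [hqx, hpx, hqx]
    · have hxS : x ∈ S := hp x hpx
      have hpxS : p x ∈ S := hp _ (moved_mem hpx)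
      have : q (p x) = p x := by
        by_contra hne
        exact hdisj _ hpxS (hq _ hne)
      rw [hqx, this]
  · have hxS' : x ∈ S' := hq x hqx
    have hqxS' : q x ∈ S' := hq _ (moved_mem hqx)
    have hpx : p x = x := by
      by_contra hne
      exact hdisj _ (hp x hne) hxS'
    have hpqx : p (q x) = q x := by
      by_contra hne
      exact hdisj _ (hp _ hne) hqxS'
    rw [hpqx, hpx]

end HomeoHelpers


/-! ### The key construction -/

lemma mapsTo_of_movedsubset {X : Type*} [TopologicalSpace X] (g : X ≃ₜ X) (S : Set X)
    (h : ∀ x, g x ≠ x → x ∈ S) : MapsTo ⇑g S S := by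
  intro x hx
  by_cases hgx : g x = x
  · rwa [hgx]
  · exact h _ (moved_mem hgx)

lemma key (A B : Set (Z α)) (hAco : IsClopen A) (hAt : (A ∩ maxRank α).Infinite)
    (hBco : IsClopen B) (hBct : (Bᶜ ∩ maxRank α).Infinite)
    (f : Z α ≃ₜ Z α) (hf : ∀ x, f x ≠ x → x ∈ B) :
    ∃ a b v : Z α ≃ₜ Z α, (∀ x, a x ≠ x → x ∈ A) ∧ (∀ x, b x ≠ x → x ∈ A) ∧
      f = v⁻¹ * (a * b * a⁻¹ * b⁻¹) * v := by
  classical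
  -- enumeration of top points
  obtain ⟨φ, ψ, hφS, hψS, hφm, hψm, hφψ⟩ :=
    disjoint_selections (tops_infinite (M := Bᶜ) hBct) (tops_infinite (M := A) hAt)
  set ee : ℤ × ℕ ≃ ℕ := Denumerable.eqv (ℤ × ℕ) with hee
  set kB : ℤ × ℕ → ℕ := fun j => φ (ee j) with hkB
  set kA : ℤ × ℕ → ℕ := fun j => ψ (ee j) with hkA
  have hkBinj : Function.Injective kB := fun j j' h => ee.injective (hφm.injective h)
  have hkAinj : Function.Injective kA := fun j j' h => ee.injective (hψm.injective h)
  have hkBA : ∀ j j', kB j ≠ kA j' := fun j j' => hφψ _ _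
  -- choice of pieces
  have hBcopen : IsOpen Bᶜ := hBco.1.isOpen_compl
  have exB : ∀ j : ℤ × ℕ, ∃ P : Piece α,
      P.set ⊆ Bᶜ ∧ P.set ⊆ (Qblk α (kB j)).set ∧ ztop α (kB j) ∈ P.set :=
    fun j => piece_in_open hBcopen (hφS (ee j))
  choose PB hPB1 hPB2 hPB3 using exB
  have exA : ∀ j : ℤ × ℕ, ∃ P : Piece α,
      P.set ⊆ A ∧ P.set ⊆ (Qblk α (kA j)).set ∧ ztop α (kA j) ∈ P.set :=
    fun j => piece_in_open hAco.2 (hψS (ee j))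
  choose PA hPA1 hPA2 hPA3 using exA
  -- disjointness of pieces
  have hPBd : ∀ {j j' : ℤ × ℕ} {x : Z α}, x ∈ (PB j).set → x ∈ (PB j').set → j = j' := by
    intro j j' x h h'
    exact hkBinj (Qblk_unique (hPB2 j h) (hPB2 j' h'))
  have hPAd : ∀ {j j' : ℤ × ℕ} {x : Z α}, x ∈ (PA j).set → x ∈ (PA j').set → j = j' := by
    intro j j' x h h'
    exact hkAinj (Qblk_unique (hPA2 j h) (hPA2 j' h'))
  have hPBA : ∀ {j j' : ℤ × ℕ} {x : Z α}, x ∈ (PB j).set → x ∈ (PA j').set → False := by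
    intro j j' x h h'
    exact hkBA j j' (Qblk_unique (hPB2 j h) (hPA2 j' h'))
  -- the main sets
  set TT : Set (Z α) := ⋃ j, (PB j).set with hTT
  set DD : Set (Z α) := ⋃ j, (PA j).set with hDD
  set T0 : Set (Z α) := ⋃ i : ℕ, (PB (0, i)).set with hT0
  set TN : Set (Z α) := ⋃ s : ℕ × ℕ, (PB ((s.1 : ℤ), s.2)).set with hTN
  have hTTcl : IsClosed TT :=
    isClosed_iUnion_blockwise _ kB hPB2 hkBinj (fun j => (PB j).isClopen_set.1)
  have hDDcl : IsClosed DD :=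
    isClosed_iUnion_blockwise _ kA hPA2 hkAinj (fun j => (PA j).isClopen_set.1)
  have hTNcl : IsClosed TN := by
    apply isClosed_iUnion_blockwise _ (fun s : ℕ × ℕ => kB ((s.1 : ℤ), s.2))
      (fun s => hPB2 _) ?_ (fun s => (PB _).isClopen_set.1)
    intro s s' h
    have hh := Prod.ext_iff.1 (hkBinj h)
    have h1 : (s.1 : ℤ) = (s'.1 : ℤ) := hh.1
    have h2 : s.2 = s'.2 := hh.2
    exact Prod.ext_iff.2 ⟨by exact_mod_cast h1, h2⟩
  have hTTop : IsOpen TT := isOpen_iUnion (fun j => (PB j).isClopen_set.2)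
  have hT0sub : T0 ⊆ TT := by
    intro x hx
    obtain ⟨i, hi⟩ := mem_iUnion.1 hx
    exact mem_iUnion.2 ⟨(0, i), hi⟩
  have hTNsub : TN ⊆ TT := by
    intro x hx
    obtain ⟨s, hs⟩ := mem_iUnion.1 hx
    exact mem_iUnion.2 ⟨_, hs⟩
  have hT0subTN : T0 ⊆ TN := by
    intro x hx
    obtain ⟨i, hi⟩ := mem_iUnion.1 hx
    exact mem_iUnion.2 ⟨(0, i), hi⟩
  have hDDsubA : DD ⊆ A := by
    intro x hx
    obtain ⟨j, hj⟩ := mem_iUnion.1 hx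
    exact hPA1 j hj
  -- the shift `g0`
  obtain ⟨g0, hg0p, hg0s⟩ := glue (α := α)
    (p := fun o => Option.elim o TTᶜ (fun j => (PB j).set))
    (q := fun o => Option.elim o TTᶜ (fun j => (PB (j.1 + 1, j.2)).set))
    (F := fun o => Option.elim o id (fun j => (PB j).tr (PB (j.1 + 1, j.2))))
    (G := fun o => Option.elim o id (fun j => (PB (j.1 + 1, j.2)).tr (PB j)))
    (hpo := by rintro (_ | j)
               · exact hTTcl.isOpen_compl
               · exact (PB j).isClopen_set.2)
    (hqo := by rintro (_ | j)
               · exact hTTcl.isOpen_compl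
               · exact (PB _).isClopen_set.2)
    (hpu := by rintro (_ | i) (_ | j) x hxi hxj
               · rfl
               · exact absurd (mem_iUnion.2 ⟨j, hxj⟩) hxi
               · exact absurd (mem_iUnion.2 ⟨i, hxi⟩) hxj
               · exact congrArg some (hPBd hxi hxj))
    (hqu := by rintro (_ | i) (_ | j) x hxi hxj
               · rfl
               · exact absurd (mem_iUnion.2 ⟨(j.1 + 1, j.2), hxj⟩ : x ∈ TT) hxi
               · exact absurd (mem_iUnion.2 ⟨(i.1 + 1, i.2), hxi⟩ : x ∈ TT) hxj
               · have hh := Prod.ext_iff.1 (hPBd hxi hxj)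
                 have h1' : i.1 + 1 = j.1 + 1 := hh.1
                 have h2' : i.2 = j.2 := hh.2
                 exact congrArg some (Prod.ext_iff.2 ⟨by omega, h2'⟩))
    (hpc := by intro x
               by_cases hx : x ∈ TT
               · obtain ⟨j, hj⟩ := mem_iUnion.1 hx
                 exact ⟨some j, hj⟩
               · exact ⟨none, hx⟩)
    (hqc := by intro y
               by_cases hy : y ∈ TT
               · obtain ⟨⟨m, i⟩, hj⟩ := mem_iUnion.1 hy
                 refine ⟨some (m - 1, i), ?_⟩
                 show y ∈ (PB (m - 1 + 1, i)).set
                 rw [show m - 1 + 1 = m by ring]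
                 exact hj
               · exact ⟨none, hy⟩)
    (hF := by rintro (_ | j)
              · exact fun x hx => hx
              · exact fun x hx => (PB j).tr_mem _ hx)
    (hG := by rintro (_ | j)
              · exact fun x hx => hx
              · exact fun y hy => (PB _).tr_mem _ hy)
    (hGF := by rintro (_ | j)
               · exact fun x _ => rfl
               · exact fun x hx => (PB j).tr_tr _ hx)
    (hFG := by rintro (_ | j)
               · exact fun y _ => rfl
               · exact fun y hy => (PB _).tr_tr _ hy)
    (hFc := by rintro (_ | j)
               · exact continuousOn_id
               · exact (PB j).tr_contOn _)
    (hGc := by rintro (_ | j)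
               · exact continuousOn_id
               · exact (PB _).tr_contOn _)
  -- g0 facts
  have hg0_mem : ∀ (j : ℤ × ℕ) (x : Z α), x ∈ (PB j).set → g0 x ∈ (PB (j.1 + 1, j.2)).set := by
    intro j x hx
    rw [hg0p (some j) x hx]
    exact (PB j).tr_mem _ hx
  have hg0_fix : ∀ x, x ∉ TT → g0 x = x := fun x hx => hg0p none x hx
  have hg0s_fix : ∀ x, x ∉ TT → g0.symm x = x := fun x hx => hg0s none x hx
  have hg0s_mem : ∀ (j : ℤ × ℕ) (x : Z α), x ∈ (PB (j.1 + 1, j.2)).set →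
      g0.symm x ∈ (PB j).set := by
    intro j x hx
    rw [hg0s (some j) x hx]
    exact (PB _).tr_mem _ hx
  -- data for `w`
  set z0 : Z α := ⟨0, zero_lt_Lam⟩ with hz0def
  set zst : Z α := ⟨(PB (0,0)).c + 1, zsucc_lt (PB (0,0)).hc⟩ with hzstdef
  have hzst_mem : zst ∈ (PB (0, 0)).set := by
    constructor
    · exact olt_add_one_iff.2 le_rfl
    · show (PB (0,0)).c + 1 ≤ (PB (0,0)).c + W α
      exact add_le_add_right (Order.one_le_iff_pos.2 W_pos) _
  set trk : ℕ → Z α → Z α := fun k => (Qblk α k).tr (PB (0, k + 1)) with htrkdef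
  set trkInv : ℕ → Z α → Z α := fun k => (PB (0, k + 1)).tr (Qblk α k) with htrkInvdef
  set Vk : ℕ → Set (Z α) := fun k => trk k '' (B ∩ (Qblk α k).set) with hVkdef
  set Vz : Set (Z α) := (fun _ => zst) '' (B ∩ {z0}) with hVzdef
  set VV : Set (Z α) := Vz ∪ ⋃ k, Vk k with hVVdef
  have hVk_sub : ∀ k, Vk k ⊆ (PB (0, k + 1)).set := by
    rintro k y ⟨x, hx, rfl⟩
    exact (Qblk α k).tr_mem _ hx.2
  have hVz_sub : Vz ⊆ (PB (0, 0)).set := by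
    rintro y ⟨x, hx, rfl⟩
    exact hzst_mem
  have hVk_clopen : ∀ k, IsClopen (Vk k) := fun k => (Qblk α k).tr_image_clopen _ hBco
  have hVz_clopen : IsClopen Vz := by
    by_cases h0 : z0 ∈ B
    · have : B ∩ {z0} = {z0} := by
        ext y
        exact ⟨fun hy => hy.2, fun hy => ⟨by rw [mem_singleton_iff] at hy; rw [hy]; exact h0, hy⟩⟩
      rw [hVzdef, this, image_singleton]
      exact isClopen_singleton_succ _ _
    · have : B ∩ {z0} = ∅ := by
        ext y
        simp only [mem_inter_iff, mem_singleton_iff, mem_empty_iff_false, iff_false, not_and]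
        intro hyB hy0
        rw [hy0] at hyB
        exact h0 hyB
      rw [hVzdef, this, image_empty]
      exact isClopen_empty
  have hVV_sub_T0 : VV ⊆ T0 := by
    rintro y (hy | hy)
    · exact mem_iUnion.2 ⟨0, hVz_sub hy⟩
    · obtain ⟨k, hk⟩ := mem_iUnion.1 hy
      exact mem_iUnion.2 ⟨k + 1, hVk_sub k hk⟩
  have hTTB : ∀ x, x ∈ TT → x ∉ B := by
    intro x hx
    obtain ⟨j, hj⟩ := mem_iUnion.1 hx
    exact fun hxB => hPB1 j hj hxB
  have hVVB : ∀ x, x ∈ VV → x ∉ B := fun x hx => hTTB x (hT0sub (hVV_sub_T0 hx))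
  have hVVcl : IsClosed VV := by
    apply IsClosed.union hVz_clopen.1
    apply isClosed_iUnion_blockwise Vk (fun k => kB (0, k + 1))
      (fun k => (hVk_sub k).trans (hPB2 _)) ?_ (fun k => (hVk_clopen k).1)
    intro k k' h
    have hh := Prod.ext_iff.1 (hkBinj h)
    have h2 : k + 1 = k' + 1 := hh.2
    omega
  have hBVcl : IsClosed (B ∪ VV) := hBco.1.union hVVcl
  have hBQco : ∀ k : ℕ, IsClopen (B ∩ (Qblk α k).set) :=
    fun k => ⟨hBco.1.inter (Qblk α k).isClopen_set.1, hBco.2.inter (Qblk α k).isClopen_set.2⟩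
  have hBz0co : IsClopen (B ∩ {z0}) := ⟨hBco.1.inter isClopen_singleton_zero.1,
    hBco.2.inter isClopen_singleton_zero.2⟩
  have hVz_mem : ∀ y, y ∈ Vz → z0 ∈ B ∧ y = zst := by
    rintro y ⟨x, ⟨hxB, hx0⟩, rfl⟩
    rw [mem_singleton_iff] at hx0
    subst hx0
    exact ⟨hxB, rfl⟩
  -- the transport homeomorphism `w`
  obtain ⟨w, hwp, hws⟩ := glue (α := α)
    (p := fun i => Sum.elim
      (fun o => Option.elim o (B ∩ {z0}) (fun k => B ∩ (Qblk α k).set))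
      (Sum.elim (fun o => Option.elim o Vz Vk) (fun _ => (B ∪ VV)ᶜ)) i)
    (q := fun i => Sum.elim
      (fun o => Option.elim o Vz Vk)
      (Sum.elim (fun o => Option.elim o (B ∩ {z0}) (fun k => B ∩ (Qblk α k).set))
        (fun _ => (B ∪ VV)ᶜ)) i)
    (F := fun i => Sum.elim
      (fun o => Option.elim o (fun _ => zst) trk)
      (Sum.elim (fun o => Option.elim o (fun _ => z0) trkInv) (fun _ => id)) i)
    (G := fun i => Sum.elim
      (fun o => Option.elim o (fun _ => z0) trkInv)
      (Sum.elim (fun o => Option.elim o (fun _ => zst) trk) (fun _ => id)) i)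
    (hpo := by
      rintro ((_ | k) | ((_ | k) | u))
      · exact hBz0co.2
      · exact (hBQco k).2
      · exact hVz_clopen.2
      · exact (hVk_clopen k).2
      · exact hBVcl.isOpen_compl)
    (hqo := by
      rintro ((_ | k) | ((_ | k) | u))
      · exact hVz_clopen.2
      · exact (hVk_clopen k).2
      · exact hBz0co.2
      · exact (hBQco k).2
      · exact hBVcl.isOpen_compl)
    (hpu := by
      rintro ((_ | k) | ((_ | k) | u)) ((_ | k') | ((_ | k') | u')) x hxi hxj <;>
        simp only [Sum.elim_inl, Sum.elim_inr, Option.elim_none, Option.elim_some] at hxi hxj <;>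
        first
        | rfl
        | (exfalso; exact (hVVB x (Or.inl hxj)) hxi.1)
        | (exfalso; exact (hVVB x (Or.inr (mem_iUnion.2 ⟨_, hxj⟩))) hxi.1)
        | (exfalso; exact (hVVB x (Or.inl hxi)) hxj.1)
        | (exfalso; exact (hVVB x (Or.inr (mem_iUnion.2 ⟨_, hxi⟩))) hxj.1)
        | (exfalso; exact hxj (Or.inl hxi.1))
        | (exfalso; exact hxi (Or.inl hxj.1))
        | (exfalso; exact hxj (Or.inr (Or.inl hxi)))
        | (exfalso; exact hxi (Or.inr (Or.inl hxj)))
        | (exfalso; exact hxj (Or.inr (Or.inr (mem_iUnion.2 ⟨_, hxi⟩))))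
        | (exfalso; exact hxi (Or.inr (Or.inr (mem_iUnion.2 ⟨_, hxj⟩))))
        | (exfalso; exact zero_notin_Qblk hxj.2 (congrArg Subtype.val (mem_singleton_iff.1 hxi.2)))
        | (exfalso; exact zero_notin_Qblk hxi.2 (congrArg Subtype.val (mem_singleton_iff.1 hxj.2)))
        | (exact congrArg (Sum.inl ∘ some : ℕ → Option ℕ ⊕ Option ℕ ⊕ Unit) (Qblk_unique hxi.2 hxj.2))
        | (exfalso;
           have := Prod.ext_iff.1 (hPBd (hVz_sub hxi) (hVk_sub _ hxj));
           exact Nat.succ_ne_zero _ this.2.symm)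
        | (exfalso;
           have := Prod.ext_iff.1 (hPBd (hVk_sub _ hxi) (hVz_sub hxj));
           exact Nat.succ_ne_zero _ this.2)
        | (have := Prod.ext_iff.1 (hPBd (hVk_sub _ hxi) (hVk_sub _ hxj));
           exact congrArg (Sum.inr ∘ Sum.inl ∘ some : ℕ → Option ℕ ⊕ Option ℕ ⊕ Unit) (by omega : k = k')))
    (hqu := by
      rintro ((_ | k) | ((_ | k) | u)) ((_ | k') | ((_ | k') | u')) x hxi hxj <;>
        simp only [Sum.elim_inl, Sum.elim_inr, Option.elim_none, Option.elim_some] at hxi hxj <;>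
        first
        | rfl
        | (exfalso; exact (hVVB x (Or.inl hxi)) hxj.1)
        | (exfalso; exact (hVVB x (Or.inr (mem_iUnion.2 ⟨_, hxi⟩))) hxj.1)
        | (exfalso; exact (hVVB x (Or.inl hxj)) hxi.1)
        | (exfalso; exact (hVVB x (Or.inr (mem_iUnion.2 ⟨_, hxj⟩))) hxi.1)
        | (exfalso; exact hxj (Or.inl hxi.1))
        | (exfalso; exact hxi (Or.inl hxj.1))
        | (exfalso; exact hxj (Or.inr (Or.inl hxi)))
        | (exfalso; exact hxi (Or.inr (Or.inl hxj)))
        | (exfalso; exact hxj (Or.inr (Or.inr (mem_iUnion.2 ⟨_, hxi⟩))))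
        | (exfalso; exact hxi (Or.inr (Or.inr (mem_iUnion.2 ⟨_, hxj⟩))))
        | (exfalso; exact zero_notin_Qblk hxj.2 (congrArg Subtype.val (mem_singleton_iff.1 hxi.2)))
        | (exfalso; exact zero_notin_Qblk hxi.2 (congrArg Subtype.val (mem_singleton_iff.1 hxj.2)))
        | (exact congrArg (Sum.inr ∘ Sum.inl ∘ some : ℕ → Option ℕ ⊕ Option ℕ ⊕ Unit) (Qblk_unique hxi.2 hxj.2))
        | (exfalso;
           have := Prod.ext_iff.1 (hPBd (hVz_sub hxi) (hVk_sub _ hxj));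
           exact Nat.succ_ne_zero _ this.2.symm)
        | (exfalso;
           have := Prod.ext_iff.1 (hPBd (hVk_sub _ hxi) (hVz_sub hxj));
           exact Nat.succ_ne_zero _ this.2)
        | (have := Prod.ext_iff.1 (hPBd (hVk_sub _ hxi) (hVk_sub _ hxj));
           exact congrArg (Sum.inl ∘ some : ℕ → Option ℕ ⊕ Option ℕ ⊕ Unit) (by omega : k = k')))
    (hpc := by
      intro x
      by_cases hxB : x ∈ B
      · by_cases hx0 : x.1 = 0
        · exact ⟨Sum.inl none, hxB, mem_singleton_iff.2 (Subtype.ext hx0)⟩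
        · obtain ⟨k, hk⟩ := exists_block x hx0
          exact ⟨Sum.inl (some k), hxB, hk⟩
      · by_cases hxV : x ∈ VV
        · rcases hxV with hxz | hxk
          · exact ⟨Sum.inr (Sum.inl none), hxz⟩
          · obtain ⟨k, hk⟩ := mem_iUnion.1 hxk
            exact ⟨Sum.inr (Sum.inl (some k)), hk⟩
        · exact ⟨Sum.inr (Sum.inr ()), fun hc => hc.elim hxB hxV⟩)
    (hqc := by
      intro x
      by_cases hxB : x ∈ B
      · by_cases hx0 : x.1 = 0
        · exact ⟨Sum.inr (Sum.inl none), hxB, mem_singleton_iff.2 (Subtype.ext hx0)⟩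
        · obtain ⟨k, hk⟩ := exists_block x hx0
          exact ⟨Sum.inr (Sum.inl (some k)), hxB, hk⟩
      · by_cases hxV : x ∈ VV
        · rcases hxV with hxz | hxk
          · exact ⟨Sum.inl none, hxz⟩
          · obtain ⟨k, hk⟩ := mem_iUnion.1 hxk
            exact ⟨Sum.inl (some k), hk⟩
        · exact ⟨Sum.inr (Sum.inr ()), fun hc => hc.elim hxB hxV⟩)
    (hF := by
      rintro ((_ | k) | ((_ | k) | u))
      · exact fun x hx => mem_image_of_mem _ hx
      · exact fun x hx => mem_image_of_mem _ hx
      · rintro y hy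
        obtain ⟨hz0B, rfl⟩ := hVz_mem y hy
        exact ⟨hz0B, rfl⟩
      · rintro y ⟨x, hx, rfl⟩
        show (PB (0, k + 1)).tr (Qblk α k) ((Qblk α k).tr (PB (0, k + 1)) x) ∈ B ∩ (Qblk α k).set
        rw [(Qblk α k).tr_tr _ hx.2]
        exact hx
      · exact fun x hx => hx)
    (hG := by
      rintro ((_ | k) | ((_ | k) | u))
      · rintro y hy
        obtain ⟨hz0B, rfl⟩ := hVz_mem y hy
        exact ⟨hz0B, rfl⟩
      · rintro y ⟨x, hx, rfl⟩
        show (PB (0, k + 1)).tr (Qblk α k) ((Qblk α k).tr (PB (0, k + 1)) x) ∈ B ∩ (Qblk α k).set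
        rw [(Qblk α k).tr_tr _ hx.2]
        exact hx
      · exact fun x hx => mem_image_of_mem _ hx
      · exact fun x hx => mem_image_of_mem _ hx
      · exact fun x hx => hx)
    (hGF := by
      rintro ((_ | k) | ((_ | k) | u))
      · intro x hx
        exact (mem_singleton_iff.1 hx.2).symm
      · intro x hx
        exact (Qblk α k).tr_tr _ hx.2
      · intro y hy
        obtain ⟨hz0B, rfl⟩ := hVz_mem y hy
        rfl
      · rintro y ⟨x, hx, rfl⟩
        show (Qblk α k).tr (PB (0, k + 1)) ((PB (0, k + 1)).tr (Qblk α k)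
          ((Qblk α k).tr (PB (0, k + 1)) x)) = (Qblk α k).tr (PB (0, k + 1)) x
        rw [(Qblk α k).tr_tr _ hx.2]
      · exact fun x _ => rfl)
    (hFG := by
      rintro ((_ | k) | ((_ | k) | u))
      · intro y hy
        obtain ⟨hz0B, rfl⟩ := hVz_mem y hy
        rfl
      · rintro y ⟨x, hx, rfl⟩
        show (Qblk α k).tr (PB (0, k + 1)) ((PB (0, k + 1)).tr (Qblk α k)
          ((Qblk α k).tr (PB (0, k + 1)) x)) = (Qblk α k).tr (PB (0, k + 1)) x
        rw [(Qblk α k).tr_tr _ hx.2]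
      · intro x hx
        exact (mem_singleton_iff.1 hx.2).symm
      · intro x hx
        exact (Qblk α k).tr_tr _ hx.2
      · exact fun x _ => rfl)
    (hFc := by
      rintro ((_ | k) | ((_ | k) | u))
      · exact continuousOn_const
      · exact ((Qblk α k).tr_contOn _).mono (fun x hx => hx.2)
      · exact continuousOn_const
      · exact ((PB (0, k + 1)).tr_contOn _).mono (hVk_sub k)
      · exact continuousOn_id)
    (hGc := by
      rintro ((_ | k) | ((_ | k) | u))
      · exact continuousOn_const
      · exact ((PB (0, k + 1)).tr_contOn _).mono (hVk_sub k)
      · exact continuousOn_const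
      · exact ((Qblk α k).tr_contOn _).mono (fun x hx => hx.2)
      · exact continuousOn_id)
  -- transport of the support of `f`
  have hwB : ∀ x, x ∈ B → w x ∈ T0 := by
    intro x hxB
    by_cases hx0 : x.1 = 0
    · have hxz : x ∈ B ∩ {z0} := ⟨hxB, mem_singleton_iff.2 (Subtype.ext hx0)⟩
      rw [hwp (Sum.inl none) x hxz]
      exact mem_iUnion.2 ⟨0, hzst_mem⟩
    · obtain ⟨k, hk⟩ := exists_block x hx0
      rw [hwp (Sum.inl (some k)) x ⟨hxB, hk⟩]
      exact mem_iUnion.2 ⟨k + 1, (Qblk α k).tr_mem _ hk⟩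
  set f0 : Z α ≃ₜ Z α := w * f * w⁻¹ with hf0def
  have hf0moved : ∀ x, f0 x ≠ x → x ∈ T0 := by
    intro x hx
    have h1 : f (w.symm x) ≠ w.symm x := moved_conj hx
    have h2 : w.symm x ∈ B := hf _ h1
    have h3 := hwB _ h2
    rwa [w.apply_symm_apply] at h3
  have hf0invmoved : ∀ x, f0.symm x ≠ x → x ∈ T0 := fun x hx => hf0moved x (moved_inv hx)
  -- the positive levels
  set TmN : ℕ → Set (Z α) := fun n => ⋃ i : ℕ, (PB ((n : ℤ), i)).set with hTmNdef
  have hTmNsubTN : ∀ n, TmN n ⊆ TN := by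
    intro n x hx
    obtain ⟨i, hi⟩ := mem_iUnion.1 hx
    exact mem_iUnion.2 ⟨(n, i), hi⟩
  have hTN_eq : ∀ x, x ∈ TN → ∃ n : ℕ, x ∈ TmN n := by
    intro x hx
    obtain ⟨s, hs⟩ := mem_iUnion.1 hx
    exact ⟨s.1, mem_iUnion.2 ⟨s.2, hs⟩⟩
  have hT0Tm : T0 ⊆ TmN 0 := by
    intro x hx
    obtain ⟨i, hi⟩ := mem_iUnion.1 hx
    refine mem_iUnion.2 ⟨i, ?_⟩
    show x ∈ (PB (((0:ℕ) : ℤ), i)).set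
    exact_mod_cast hi
  have hTm0T : TmN 0 ⊆ T0 := by
    intro x hx
    obtain ⟨i, hi⟩ := mem_iUnion.1 hx
    refine mem_iUnion.2 ⟨i, ?_⟩
    have : (((0:ℕ) : ℤ), i) = ((0 : ℤ), i) := by norm_num
    rwa [this] at hi
  -- powers of `g0`
  have hg0pow_mem : ∀ (n : ℕ) (j : ℤ × ℕ) (x : Z α), x ∈ (PB j).set →
      (g0 ^ n) x ∈ (PB (j.1 + n, j.2)).set := by
    intro n
    induction n with
    | zero =>
      intro j x hx
      rw [pow_zero]
      show x ∈ (PB (j.1 + ((0:ℕ) : ℤ), j.2)).set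
      have : (j.1 + ((0:ℕ) : ℤ), j.2) = j := by
        rw [Int.natCast_zero, add_zero]
      rwa [this]
    | succ n ih =>
      intro j x hx
      rw [pow_succ]
      show (g0 ^ n) (g0 x) ∈ _
      have h1 := hg0_mem j x hx
      have h2 := ih (j.1 + 1, j.2) _ h1
      have h3 : (j.1 + 1 + (n : ℤ), j.2) = (j.1 + ((n + 1 : ℕ) : ℤ), j.2) := by
        rw [Prod.ext_iff]
        constructor
        · push_cast
          ring
        · rfl
      rwa [h3] at h2
  have hg0pow_fix : ∀ (n : ℕ) (x : Z α), x ∉ TT → (g0 ^ n) x = x := by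
    intro n
    induction n with
    | zero => intro x hx; rfl
    | succ n ih =>
      intro x hx
      rw [pow_succ]
      show (g0 ^ n) (g0 x) = x
      rw [hg0_fix x hx]
      exact ih x hx
  have hg0pow_symm_mem : ∀ (n : ℕ) (x : Z α) (i : ℕ), x ∈ (PB ((n : ℤ), i)).set →
      (g0 ^ n).symm x ∈ (PB (0, i)).set := by
    intro n x i hx
    have hxy : (g0 ^ n) ((g0 ^ n).symm x) = x := (g0 ^ n).apply_symm_apply x
    by_cases hyTT : (g0 ^ n).symm x ∈ TT
    · obtain ⟨j', hj'⟩ := mem_iUnion.1 hyTT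
      have h1 := hg0pow_mem n j' _ hj'
      rw [hxy] at h1
      have h3 := Prod.ext_iff.1 (hPBd h1 hx)
      have hj1 : j'.1 = 0 := by have := h3.1; omega
      have hj2 : j'.2 = i := h3.2
      have : j' = (0, i) := Prod.ext_iff.2 ⟨hj1, hj2⟩
      rwa [this] at hj'
    · exfalso
      rw [hg0pow_fix n _ hyTT] at hxy
      rw [hxy] at hyTT
      exact hyTT (mem_iUnion.2 ⟨_, hx⟩)
  -- conjugates preserve levels
  have hconjmaps : ∀ (n : ℕ) (h' : Z α ≃ₜ Z α), (∀ x, h' x ≠ x → x ∈ T0) →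
      MapsTo ⇑(g0 ^ n * h' * (g0 ^ n)⁻¹) (TmN n) (TmN n) := by
    intro n h' hh' x hx
    obtain ⟨i, hi⟩ := mem_iUnion.1 hx
    have hy := hg0pow_symm_mem n x i hi
    have hy0 : h' ((g0 ^ n).symm x) ∈ T0 :=
      mapsTo_of_movedsubset h' T0 hh' (mem_iUnion.2 ⟨i, hy⟩)
    obtain ⟨i', hi'⟩ := mem_iUnion.1 hy0
    show (g0 ^ n) (h' ((g0 ^ n).symm x)) ∈ TmN n
    have h2 := hg0pow_mem n (0, i') _ hi'
    rw [show ((0 : ℤ) + (n : ℤ), i') = ((n : ℤ), i') by rw [zero_add]] at h2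
    exact mem_iUnion.2 ⟨i', h2⟩
  -- the infinite product homeomorphism
  obtain ⟨FF, hFFp, hFFs⟩ := glue (α := α)
    (p := fun o => Option.elim o TNᶜ TmN)
    (q := fun o => Option.elim o TNᶜ TmN)
    (F := fun o => Option.elim o id (fun n => ⇑(g0 ^ n * f0 * (g0 ^ n)⁻¹)))
    (G := fun o => Option.elim o id (fun n => ⇑((g0 ^ n * f0 * (g0 ^ n)⁻¹)⁻¹)))
    (hpo := by
      rintro (_ | n)
      · exact hTNcl.isOpen_compl
      · exact isOpen_iUnion (fun i => (PB _).isClopen_set.2))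
    (hqo := by
      rintro (_ | n)
      · exact hTNcl.isOpen_compl
      · exact isOpen_iUnion (fun i => (PB _).isClopen_set.2))
    (hpu := by
      rintro (_ | n) (_ | n') x hxi hxj
      · rfl
      · exact absurd (hTmNsubTN n' hxj) hxi
      · exact absurd (hTmNsubTN n hxi) hxj
      · obtain ⟨i, hi⟩ := mem_iUnion.1 hxi
        obtain ⟨i', hi'⟩ := mem_iUnion.1 hxj
        have h1 : (n : ℤ) = (n' : ℤ) := (Prod.ext_iff.1 (hPBd hi hi')).1
        have h2 : n = n' := by exact_mod_cast h1
        rw [h2])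
    (hqu := by
      rintro (_ | n) (_ | n') x hxi hxj
      · rfl
      · exact absurd (hTmNsubTN n' hxj) hxi
      · exact absurd (hTmNsubTN n hxi) hxj
      · obtain ⟨i, hi⟩ := mem_iUnion.1 hxi
        obtain ⟨i', hi'⟩ := mem_iUnion.1 hxj
        have h1 : (n : ℤ) = (n' : ℤ) := (Prod.ext_iff.1 (hPBd hi hi')).1
        have h2 : n = n' := by exact_mod_cast h1
        rw [h2])
    (hpc := by
      intro x
      by_cases hx : x ∈ TN
      · obtain ⟨n, hn⟩ := hTN_eq x hx
        exact ⟨some n, hn⟩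
      · exact ⟨none, hx⟩)
    (hqc := by
      intro x
      by_cases hx : x ∈ TN
      · obtain ⟨n, hn⟩ := hTN_eq x hx
        exact ⟨some n, hn⟩
      · exact ⟨none, hx⟩)
    (hF := by
      rintro (_ | n)
      · exact fun x hx => hx
      · exact hconjmaps n f0 hf0moved)
    (hG := by
      rintro (_ | n)
      · exact fun x hx => hx
      · intro x hx
        show ((g0 ^ n * f0 * (g0 ^ n)⁻¹)⁻¹) x ∈ TmN n
        have heq : (g0 ^ n * f0 * (g0 ^ n)⁻¹)⁻¹ = g0 ^ n * f0⁻¹ * (g0 ^ n)⁻¹ := by group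
        rw [heq]
        exact hconjmaps n f0⁻¹ (fun y hy => hf0invmoved y hy) hx)
    (hGF := by
      rintro (_ | n)
      · exact fun x _ => rfl
      · exact fun x _ => Homeomorph.symm_apply_apply _ x)
    (hFG := by
      rintro (_ | n)
      · exact fun x _ => rfl
      · exact fun x _ => Homeomorph.apply_symm_apply _ x)
    (hFc := by
      rintro (_ | n)
      · exact continuousOn_id
      · exact (Homeomorph.continuous _).continuousOn)
    (hGc := by
      rintro (_ | n)
      · exact continuousOn_id
      · exact (Homeomorph.continuous _).continuousOn)
  have hFFnone : ∀ x, x ∉ TN → FF x = x := fun x hx => hFFp none x hx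
  have hFFsymm_none : ∀ x, x ∉ TN → FF.symm x = x := fun x hx => hFFs none x hx
  have hFFsome : ∀ (n : ℕ) (x : Z α), x ∈ TmN n →
      FF x = (g0 ^ n * f0 * (g0 ^ n)⁻¹) x := fun n x hx => hFFp (some n) x hx
  have hFFsymm_some : ∀ (n : ℕ) (x : Z α), x ∈ TmN n →
      FF.symm x = ((g0 ^ n * f0 * (g0 ^ n)⁻¹)⁻¹) x := fun n x hx => hFFs (some n) x hx
  -- the Mather identity
  have MM : FF * g0 * FF⁻¹ * g0⁻¹ = f0 := by
    apply Homeomorph.ext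
    intro x
    show FF (g0 (FF.symm (g0.symm x))) = f0 x
    by_cases hxTT : x ∈ TT
    · obtain ⟨⟨m, i⟩, hj⟩ := mem_iUnion.1 hxTT
      have hxnotTN_of_neg : m < 0 → x ∉ TN := by
        intro hm hmem
        obtain ⟨n, hn⟩ := hTN_eq x hmem
        obtain ⟨i', hi'⟩ := mem_iUnion.1 hn
        have := (Prod.ext_iff.1 (hPBd hj hi')).1
        omega
      rcases lt_trichotomy m 0 with hm | rfl | hm
      · -- negative level : everything fixed
        have hx1 : g0.symm x ∈ (PB (m - 1, i)).set := by
          apply hg0s_mem (m - 1, i) x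
          show x ∈ (PB (m - 1 + 1, i)).set
          rw [show m - 1 + 1 = m by ring]
          exact hj
        have hx1TN : g0.symm x ∉ TN := by
          intro hmem
          obtain ⟨n, hn⟩ := hTN_eq _ hmem
          obtain ⟨i', hi'⟩ := mem_iUnion.1 hn
          have := (Prod.ext_iff.1 (hPBd hx1 hi')).1
          omega
        rw [hFFsymm_none _ hx1TN, g0.apply_symm_apply]
        have hxTN : x ∉ TN := hxnotTN_of_neg hm
        rw [hFFnone _ hxTN]
        have hfix : f0 x = x := by
          by_contra hne
          exact hxTN (hT0subTN (hf0moved x hne))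
        rw [hfix]
      · -- level zero
        have hx1 : g0.symm x ∈ (PB (-1, i)).set := by
          apply hg0s_mem (-1, i) x
          show x ∈ (PB (-1 + 1, i)).set
          rw [show (-1 : ℤ) + 1 = 0 by ring]
          exact hj
        have hx1TN : g0.symm x ∉ TN := by
          intro hmem
          obtain ⟨n, hn⟩ := hTN_eq _ hmem
          obtain ⟨i', hi'⟩ := mem_iUnion.1 hn
          have := (Prod.ext_iff.1 (hPBd hx1 hi')).1
          omega
        rw [hFFsymm_none _ hx1TN, g0.apply_symm_apply]
        have hxT0 : x ∈ TmN 0 := hT0Tm (mem_iUnion.2 ⟨i, hj⟩)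
        rw [hFFsome 0 x hxT0]
        show (g0 ^ 0 * f0 * (g0 ^ 0)⁻¹) x = f0 x
        rw [show g0 ^ 0 * f0 * (g0 ^ 0)⁻¹ = f0 by group]
      · -- positive level
        obtain ⟨n, rfl⟩ : ∃ n : ℕ, m = (n : ℤ) + 1 := ⟨(m - 1).toNat, by omega⟩
        have hx1 : g0.symm x ∈ (PB ((n : ℤ), i)).set := hg0s_mem ((n : ℤ), i) x hj
        have hx1Tm : g0.symm x ∈ TmN n := mem_iUnion.2 ⟨i, hx1⟩
        rw [hFFsymm_some n _ hx1Tm]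
        have hy : ((g0 ^ n * f0 * (g0 ^ n)⁻¹)⁻¹) (g0.symm x) ∈ TmN n := by
          have hmt : MapsTo ⇑((g0 ^ n * f0 * (g0 ^ n)⁻¹)⁻¹) (TmN n) (TmN n) := by
            rw [show (g0 ^ n * f0 * (g0 ^ n)⁻¹)⁻¹ = g0 ^ n * f0⁻¹ * (g0 ^ n)⁻¹ by group]
            exact hconjmaps n f0⁻¹ (fun y hy => hf0invmoved y hy)
          exact hmt hx1Tm
        obtain ⟨i2, hi2⟩ := mem_iUnion.1 hy
        have hgy := hg0_mem ((n : ℤ), i2) _ hi2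
        have hgyT : g0 (((g0 ^ n * f0 * (g0 ^ n)⁻¹)⁻¹) (g0.symm x)) ∈ TmN (n + 1) := by
          refine mem_iUnion.2 ⟨i2, ?_⟩
          have : (((n : ℤ) + 1), i2) = (((n + 1 : ℕ) : ℤ), i2) := by
            rw [Prod.ext_iff]
            exact ⟨by push_cast; ring, rfl⟩
          rwa [this] at hgy
        rw [hFFsome (n + 1) _ hgyT]
        show ((g0 ^ (n + 1) * f0 * (g0 ^ (n + 1))⁻¹) * g0 *
          ((g0 ^ n * f0 * (g0 ^ n)⁻¹)⁻¹) * g0⁻¹) x = f0 x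
        rw [show (g0 ^ (n + 1) * f0 * (g0 ^ (n + 1))⁻¹) * g0 *
          ((g0 ^ n * f0 * (g0 ^ n)⁻¹)⁻¹) * g0⁻¹ = 1 by group]
        have hxT0 : x ∉ T0 := by
          intro hmem
          obtain ⟨i', hi'⟩ := mem_iUnion.1 hmem
          have := (Prod.ext_iff.1 (hPBd hj hi')).1
          omega
        have hfix : f0 x = x := by
          by_contra hne
          exact hxT0 (hf0moved x hne)
        rw [hfix]
        rfl
    · -- fixed region
      have hxTN : x ∉ TN := fun hmem => hxTT (hTNsub hmem)
      rw [hg0s_fix x hxTT, hFFsymm_none _ hxTN, hg0_fix x hxTT, hFFnone _ hxTN]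
      have hfix : f0 x = x := by
        by_contra hne
        exact hxTT (hT0sub (hf0moved x hne))
      rw [hfix]
  -- the transport `u` between `TT` and `DD`
  have hTDcl : IsClosed (TT ∪ DD) := hTTcl.union hDDcl
  obtain ⟨u, hup, hus⟩ := glue (α := α)
    (p := fun i => Sum.elim (fun j => (PB j).set)
      (Sum.elim (fun j => (PA j).set) (fun _ => (TT ∪ DD)ᶜ)) i)
    (q := fun i => Sum.elim (fun j => (PA j).set)
      (Sum.elim (fun j => (PB j).set) (fun _ => (TT ∪ DD)ᶜ)) i)
    (F := fun i => Sum.elim (fun j => (PB j).tr (PA j))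
      (Sum.elim (fun j => (PA j).tr (PB j)) (fun _ => id)) i)
    (G := fun i => Sum.elim (fun j => (PA j).tr (PB j))
      (Sum.elim (fun j => (PB j).tr (PA j)) (fun _ => id)) i)
    (hpo := by
      rintro (j | (j | u))
      · exact (PB j).isClopen_set.2
      · exact (PA j).isClopen_set.2
      · exact hTDcl.isOpen_compl)
    (hqo := by
      rintro (j | (j | u))
      · exact (PA j).isClopen_set.2
      · exact (PB j).isClopen_set.2
      · exact hTDcl.isOpen_compl)
    (hpu := by
      rintro (j | (j | u)) (j' | (j' | u')) x hxi hxj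
      · exact congrArg (Sum.inl : ℤ × ℕ → (ℤ × ℕ) ⊕ ((ℤ × ℕ) ⊕ Unit)) (hPBd hxi hxj)
      · exact (hPBA hxi hxj).elim
      · exact absurd (Or.inl (mem_iUnion.2 ⟨j, hxi⟩) : x ∈ TT ∪ DD) hxj
      · exact (hPBA hxj hxi).elim
      · exact congrArg (Sum.inr ∘ Sum.inl : ℤ × ℕ → (ℤ × ℕ) ⊕ ((ℤ × ℕ) ⊕ Unit)) (hPAd hxi hxj)
      · exact absurd (Or.inr (mem_iUnion.2 ⟨j, hxi⟩) : x ∈ TT ∪ DD) hxj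
      · exact absurd (Or.inl (mem_iUnion.2 ⟨j', hxj⟩) : x ∈ TT ∪ DD) hxi
      · exact absurd (Or.inr (mem_iUnion.2 ⟨j', hxj⟩) : x ∈ TT ∪ DD) hxi
      · rfl)
    (hqu := by
      rintro (j | (j | u)) (j' | (j' | u')) x hxi hxj
      · exact congrArg (Sum.inl : ℤ × ℕ → (ℤ × ℕ) ⊕ ((ℤ × ℕ) ⊕ Unit)) (hPAd hxi hxj)
      · exact (hPBA hxj hxi).elim
      · exact absurd (Or.inr (mem_iUnion.2 ⟨j, hxi⟩) : x ∈ TT ∪ DD) hxj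
      · exact (hPBA hxi hxj).elim
      · exact congrArg (Sum.inr ∘ Sum.inl : ℤ × ℕ → (ℤ × ℕ) ⊕ ((ℤ × ℕ) ⊕ Unit)) (hPBd hxi hxj)
      · exact absurd (Or.inl (mem_iUnion.2 ⟨j, hxi⟩) : x ∈ TT ∪ DD) hxj
      · exact absurd (Or.inr (mem_iUnion.2 ⟨j', hxj⟩) : x ∈ TT ∪ DD) hxi
      · exact absurd (Or.inl (mem_iUnion.2 ⟨j', hxj⟩) : x ∈ TT ∪ DD) hxi
      · rfl)
    (hpc := by
      intro x
      by_cases hx : x ∈ TT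
      · obtain ⟨j, hj⟩ := mem_iUnion.1 hx
        exact ⟨Sum.inl j, hj⟩
      · by_cases hx' : x ∈ DD
        · obtain ⟨j, hj⟩ := mem_iUnion.1 hx'
          exact ⟨Sum.inr (Sum.inl j), hj⟩
        · exact ⟨Sum.inr (Sum.inr ()), fun hc => hc.elim hx hx'⟩)
    (hqc := by
      intro x
      by_cases hx : x ∈ DD
      · obtain ⟨j, hj⟩ := mem_iUnion.1 hx
        exact ⟨Sum.inl j, hj⟩
      · by_cases hx' : x ∈ TT
        · obtain ⟨j, hj⟩ := mem_iUnion.1 hx'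
          exact ⟨Sum.inr (Sum.inl j), hj⟩
        · exact ⟨Sum.inr (Sum.inr ()), fun hc => hc.elim hx' hx⟩)
    (hF := by
      rintro (j | (j | u))
      · exact fun x hx => (PB j).tr_mem _ hx
      · exact fun x hx => (PA j).tr_mem _ hx
      · exact fun x hx => hx)
    (hG := by
      rintro (j | (j | u))
      · exact fun x hx => (PA j).tr_mem _ hx
      · exact fun x hx => (PB j).tr_mem _ hx
      · exact fun x hx => hx)
    (hGF := by
      rintro (j | (j | u))
      · exact fun x hx => (PB j).tr_tr _ hx
      · exact fun x hx => (PA j).tr_tr _ hx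
      · exact fun x _ => rfl)
    (hFG := by
      rintro (j | (j | u))
      · exact fun x hx => (PA j).tr_tr _ hx
      · exact fun x hx => (PB j).tr_tr _ hx
      · exact fun x _ => rfl)
    (hFc := by
      rintro (j | (j | u))
      · exact (PB j).tr_contOn _
      · exact (PA j).tr_contOn _
      · exact continuousOn_id)
    (hGc := by
      rintro (j | (j | u))
      · exact (PA j).tr_contOn _
      · exact (PB j).tr_contOn _
      · exact continuousOn_id)
  have hu_mem : ∀ (j : ℤ × ℕ) (x : Z α), x ∈ (PB j).set → u x ∈ (PA j).set := by
    intro j x hx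
    rw [hup (Sum.inl j) x hx]
    exact (PB j).tr_mem _ hx
  -- the conjugated generators
  have haA : ∀ x, (u * FF * u⁻¹) x ≠ x → x ∈ A := by
    intro x hx
    have h1 : FF (u.symm x) ≠ u.symm x := moved_conj hx
    have h2 : u.symm x ∈ TN := by
      by_contra hmem
      exact h1 (hFFnone _ hmem)
    obtain ⟨s, hs⟩ := mem_iUnion.1 h2
    have h3 := hu_mem ((s.1 : ℤ), s.2) _ hs
    rw [u.apply_symm_apply] at h3
    exact hDDsubA (mem_iUnion.2 ⟨_, h3⟩)
  have hbA : ∀ x, (u * g0 * u⁻¹) x ≠ x → x ∈ A := by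
    intro x hx
    have h1 : g0 (u.symm x) ≠ u.symm x := moved_conj hx
    have h2 : u.symm x ∈ TT := by
      by_contra hmem
      exact h1 (hg0_fix _ hmem)
    obtain ⟨j, hjx⟩ := mem_iUnion.1 h2
    have h3 := hu_mem j _ hjx
    rw [u.apply_symm_apply] at h3
    exact hDDsubA (mem_iUnion.2 ⟨j, h3⟩)
  refine ⟨u * FF * u⁻¹, u * g0 * u⁻¹, u * w, haA, hbA, ?_⟩
  have e1 : (u * FF * u⁻¹) * (u * g0 * u⁻¹) * (u * FF * u⁻¹)⁻¹ * (u * g0 * u⁻¹)⁻¹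
      = u * (FF * g0 * FF⁻¹ * g0⁻¹) * u⁻¹ := by group
  rw [e1, MM, hf0def]
  group

end And14

/-- Anderson's method: if `h` moves some moiety `A` off itself, then every
homeomorphism supported in a topological moiety is a product of four conjugates
of `h` and `h⁻¹`. -/
theorem statement14 (α : Ordinal.{0})
    (h : OrdT (Ordinal.omega0 ^ (α + 1)) ≃ₜ OrdT (Ordinal.omega0 ^ (α + 1)))
    (A : Set (OrdT (Ordinal.omega0 ^ (α + 1)))) (hA : IsMoiety α A)
    (hd : Disjoint (⇑h '' A) A) :
    ∀ f : OrdT (Ordinal.omega0 ^ (α + 1)) ≃ₜ OrdT (Ordinal.omega0 ^ (α + 1)),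
      (∃ B, IsMoiety α B ∧ closure {x | f x ≠ x} ⊆ B) →
      ∃ c : Fin 4 → (OrdT (Ordinal.omega0 ^ (α + 1)) ≃ₜ OrdT (Ordinal.omega0 ^ (α + 1))),
        (∀ i, ∃ g, c i = g * h * g⁻¹ ∨ c i = g * h⁻¹ * g⁻¹) ∧
        f = c 0 * c 1 * c 2 * c 3 := by
  rintro f ⟨B, hB, hclB⟩
  obtain ⟨a, b, v, haA, hbA, heq⟩ := And14.key A B hA.1 hA.2.1 hB.1 hB.2.2
    f (fun x hx => hclB (subset_closure hx))
  have hX : ∀ x, (h * a⁻¹ * h⁻¹) x ≠ x → x ∈ (⇑h '' A) := by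
    intro x hx
    have h1 : (a⁻¹) (h.symm x) ≠ h.symm x := And14.moved_conj hx
    have h2 : h.symm x ∈ A := haA _ (And14.moved_inv h1)
    exact ⟨h.symm x, h2, h.apply_symm_apply x⟩
  have comm : (h * a⁻¹ * h⁻¹) * b = b * (h * a⁻¹ * h⁻¹) :=
    And14.commute_of_disjoint_moved hX hbA
      (fun x h1 h2 => (Set.disjoint_left.1 hd) h1 h2)
  refine ⟨![(v⁻¹ * a) * h * (v⁻¹ * a)⁻¹, v⁻¹ * h⁻¹ * (v⁻¹)⁻¹,
    (v⁻¹ * b) * h * (v⁻¹ * b)⁻¹, (v⁻¹ * b * a) * h⁻¹ * (v⁻¹ * b * a)⁻¹], ?_, ?_⟩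
  · intro i
    fin_cases i
    · exact ⟨v⁻¹ * a, Or.inl rfl⟩
    · exact ⟨v⁻¹, Or.inr rfl⟩
    · exact ⟨v⁻¹ * b, Or.inl rfl⟩
    · exact ⟨v⁻¹ * b * a, Or.inr rfl⟩
  · show f = _
    simp only [Matrix.cons_val_zero, Matrix.cons_val_one, Matrix.head_cons,
      Matrix.cons_val_two, Matrix.tail_cons, Matrix.cons_val_three]
    have step : ((v⁻¹ * a) * h * (v⁻¹ * a)⁻¹) * (v⁻¹ * h⁻¹ * (v⁻¹)⁻¹) *
        ((v⁻¹ * b) * h * (v⁻¹ * b)⁻¹) * ((v⁻¹ * b * a) * h⁻¹ * (v⁻¹ * b * a)⁻¹)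
        = v⁻¹ * (a * ((h * a⁻¹ * h⁻¹) * b) * (h * a * h⁻¹) * a⁻¹ * b⁻¹) * v := by
      group
    rw [heq, step, comm]
    group
end
end

section
/- Let α be an ordinal and h ∈ Homeo(ω^{α+1}). If h induces an infinite permutation on the set of maximal rank elements {ω^α·k : k ∈ ℕ} of ω^{α+1} (i.e., moves infinitely many of them), then there exists a topological moiety A such that h(A) ∩ A = ∅ and A ∪ h(A) is a topological moiety. -/
noncomputable section

open Ordinal Topology Set

namespace St15
open Filter


variable {α : Ordinal.{0}}

abbrev XX (α : Ordinal.{0}) := OrdT (Ordinal.omega0 ^ (α + 1))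

instance (o : Ordinal.{0}) : OrderTopology (OrdT o) :=
  orderTopology_of_ordConnected (t := Set.Iio o)

lemma top_eq : omega0 ^ (α + 1) = omega0 ^ α * omega0 := by
  rw [add_one_eq_succ, opow_succ]

lemma top_limit : Order.IsSuccLimit (omega0 ^ (α + 1)) := by
  rw [top_eq]; exact isSuccLimit_mul_right (opow_pos α omega0_pos) isSuccLimit_omega0

lemma succ_lt {u : Ordinal} (hu : u < omega0 ^ (α + 1)) : u + 1 < omega0 ^ (α + 1) := by
  rw [add_one_eq_succ]; exact top_limit.succ_lt hu

def succX (x : XX α) : XX α := ⟨x.1 + 1, succ_lt x.2⟩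

lemma lt_succX {x y : XX α} : x < succX y ↔ x ≤ y := by
  rw [← Subtype.coe_lt_coe, ← Subtype.coe_le_coe]
  exact Order.lt_add_one_iff

lemma succX_le {x y : XX α} : succX x ≤ y ↔ x < y := by
  rw [← Subtype.coe_lt_coe, ← Subtype.coe_le_coe]
  exact Order.add_one_le_iff

lemma isClopen_Iic' (b : XX α) : IsClopen (Set.Iic b) := by
  constructor
  · exact isClosed_Iic
  · have : Set.Iic b = Set.Iio (succX b) := by ext u; simp [lt_succX]
    rw [this]; exact isOpen_Iio

lemma isClopen_Ioc' (a b : XX α) : IsClopen (Set.Ioc a b) := by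
  constructor
  · have : Set.Ioc a b = Set.Icc (succX a) b := by ext u; simp [succX_le, Set.mem_Icc]
    rw [this]; exact isClosed_Icc
  · have : Set.Ioc a b = Set.Ioi a ∩ Set.Iio (succX b) := by
      ext u; simp [lt_succX, Set.mem_Ioc]
    rw [this]; exact (isOpen_Ioi).inter isOpen_Iio

/-- the `k`-th maximal rank point `ω^α * (k+1)` -/
def m (α : Ordinal.{0}) (k : ℕ) : XX α :=
  ⟨omega0 ^ α * ((k : Ordinal) + 1), by
    rw [top_eq]
    exact (mul_lt_mul_iff_right₀ (opow_pos α omega0_pos)).2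
      (by simpa using nat_lt_omega0 (k + 1))⟩

lemma m_lt_m {j k : ℕ} : m α j < m α k ↔ j < k := by
  rw [← Subtype.coe_lt_coe]
  show omega0 ^ α * _ < omega0 ^ α * _ ↔ _
  rw [mul_lt_mul_iff_right₀ (opow_pos α omega0_pos)]
  simp only [add_one_eq_succ, Order.succ_lt_succ_iff, Nat.cast_lt]

lemma m_inj : Function.Injective (m α) := by
  intro j k hjk
  rcases lt_trichotomy j k with hl | he | hl
  · exact absurd (m_lt_m.2 hl) (by rw [hjk]; exact lt_irrefl _)
  · exact he
  · exact absurd (m_lt_m.2 hl) (by rw [hjk]; exact lt_irrefl _)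

lemma blk_ex (x : XX α) : ∃ k : ℕ, x ≤ m α k := by
  have hx : x.1 < omega0 ^ α * omega0 := by rw [← top_eq]; exact x.2
  obtain ⟨c, hc, hxc⟩ := (lt_mul_iff_of_isSuccLimit isSuccLimit_omega0).1 hx
  obtain ⟨n, rfl⟩ := lt_omega0.1 hc
  refine ⟨n, ?_⟩
  rw [← Subtype.coe_le_coe]
  show x.1 ≤ omega0 ^ α * _
  exact le_trans hxc.le (mul_le_mul_right (by simpa using (le_add_right (n : Ordinal) 1)) _)

def blk (x : XX α) : ℕ := Nat.find (blk_ex x)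

lemma blk_le (x : XX α) : x ≤ m α (blk x) := Nat.find_spec (blk_ex x)

lemma blk_min {x : XX α} {j : ℕ} (hj : x ≤ m α j) : blk x ≤ j := Nat.find_min' (blk_ex x) hj

lemma blk_m (k : ℕ) : blk (m α k) = k := by
  refine le_antisymm (blk_min le_rfl) ?_
  by_contra hlt
  exact absurd (blk_le (m α k)) (not_le.2 (m_lt_m.2 (not_le.1 hlt)))

lemma mem_maxRank_iff {x : XX α} : x ∈ maxRank α ↔ ∃ k, x = m α k := by
  constructor
  · rintro ⟨k, hk, hx⟩
    obtain ⟨j, rfl⟩ := Nat.exists_eq_succ_of_ne_zero hk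
    exact ⟨j, Subtype.ext (by rw [hx]; simp [m, Nat.cast_add])⟩
  · rintro ⟨k, rfl⟩
    exact ⟨k + 1, Nat.succ_ne_zero k, by simp [m, Nat.cast_add]⟩


def fib (α : Ordinal.{0}) (j : ℕ) : Set (XX α) := {x | blk x = j}

lemma mem_fib_self (x : XX α) : x ∈ fib α (blk x) := rfl

lemma strictMono_m : StrictMono (m α) := fun _ _ h => m_lt_m.2 h

lemma fib_zero : fib α 0 = Set.Iic (m α 0) := by
  ext x
  constructor
  · intro hx; have := blk_le x; rwa [hx] at this
  · intro hx; exact Nat.le_zero.1 (blk_min hx)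

lemma fib_succ (i : ℕ) : fib α (i + 1) = Set.Ioc (m α i) (m α (i + 1)) := by
  ext x
  constructor
  · intro hx
    refine ⟨?_, by have := blk_le x; rwa [hx] at this⟩
    by_contra hle
    have h1 := blk_min (not_lt.1 hle)
    have h2 : blk x = i + 1 := hx
    omega
    -- blk x ≤ i but blk x = i+1
  · rintro ⟨hlt, hle⟩
    refine le_antisymm (blk_min hle) ?_
    by_contra hlt2
    have h1 : blk x ≤ i := by omega
    have : x ≤ m α i := le_trans (blk_le x) (strictMono_m.monotone h1)
    exact absurd hlt (not_lt.2 this)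

lemma isClopen_fib (j : ℕ) : IsClopen (fib α j) := by
  cases j with
  | zero => rw [fib_zero]; exact isClopen_Iic' _
  | succ i => rw [fib_succ]; exact isClopen_Ioc' _ _

lemma maxRank_eq {x : XX α} (hx : x ∈ maxRank α) : x = m α (blk x) := by
  obtain ⟨k, rfl⟩ := mem_maxRank_iff.1 hx
  rw [blk_m]

lemma not_accPt_maxRank (x : XX α) : ¬ AccPt x (𝓟 (maxRank α)) := by
  intro hacc
  rw [accPt_iff_nhds] at hacc
  by_cases hx : x = m α (blk x)
  · obtain ⟨y, ⟨hyU, hyM⟩, hyne⟩ :=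
      hacc (fib α (blk x)) ((isClopen_fib _).2.mem_nhds (mem_fib_self x))
    exact hyne (by rw [maxRank_eq hyM, hyU, ← hx])
  · have hxlt : x < m α (blk x) := lt_of_le_of_ne (blk_le x) hx
    obtain ⟨y, ⟨⟨hy1, hy2⟩, hyM⟩, hyne⟩ :=
      hacc (Set.Iio (m α (blk x)) ∩ fib α (blk x))
        ((isOpen_Iio.inter (isClopen_fib _).2).mem_nhds ⟨hxlt, mem_fib_self x⟩)
    have heq : y = m α (blk x) := by rw [maxRank_eq hyM, hy2]
    have hy1' : y < m α (blk x) := hy1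
    rw [heq] at hy1'
    exact lt_irrefl _ hy1'

lemma isCompact_Iic' (b : XX α) : IsCompact (Set.Iic b) := by
  rw [Topology.IsEmbedding.subtypeVal.isCompact_iff]
  have himg : Subtype.val '' (Set.Iic b) = Set.Icc 0 b.1 := by
    ext u
    constructor
    · rintro ⟨v, hv, rfl⟩; exact ⟨zero_le, hv⟩
    · rintro ⟨-, hub⟩; exact ⟨⟨u, lt_of_le_of_lt hub b.2⟩, hub, rfl⟩
  rw [himg]; exact isCompact_Icc

lemma finite_blk_h (h : XX α ≃ₜ XX α) (k : ℕ) :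
    {x | x ∈ maxRank α ∧ blk (h x) = k}.Finite := by
  by_contra hfin
  replace hfin : {x | x ∈ maxRank α ∧ blk (h x) = k}.Infinite := hfin
  set T := {x | x ∈ maxRank α ∧ blk (h x) = k} with hT
  have hTim : (⇑h '' T).Infinite := hfin.image h.injective.injOn
  have hsub : ⇑h '' T ⊆ Set.Iic (m α k) := by
    rintro y ⟨x, hx, rfl⟩
    have := blk_le (h x)
    rwa [hx.2] at this
  obtain ⟨z, -, hz⟩ := hTim.exists_accPt_of_subset_isCompact (isCompact_Iic' _) hsub
  have hacc : AccPt (h.symm z) (𝓟 T) := by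
    rw [accPt_iff_nhds] at hz ⊢
    intro U hU
    obtain ⟨y, ⟨hyU, hyT⟩, hyz⟩ := hz _ (h.symm.continuous.continuousAt.preimage_mem_nhds hU)
    obtain ⟨t, htT, rfl⟩ := hyT
    refine ⟨t, ⟨by simpa using hyU, htT⟩, fun he => hyz ?_⟩
    rw [he]; simp
  exact not_accPt_maxRank _ (hacc.mono (Filter.principal_mono.2 fun x hx => hx.1))

lemma exists_U (h : XX α ≃ₜ XX α) {x : XX α} (hx : x ∈ maxRank α) (hne : h x ≠ x) :
    ∃ U : Set (XX α), IsClopen U ∧ x ∈ U ∧ (∀ u ∈ U, blk u = blk x) ∧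
      (∀ u ∈ U, blk (h u) = blk (h x)) ∧ Disjoint U (⇑h '' U) := by
  obtain ⟨O1, O2, hO1, hO2, hxO1, hyO2, hdisj⟩ := t2_separation (Ne.symm hne)
  have hN : IsOpen (⇑h ⁻¹' (O2 ∩ fib α (blk (h x)))) :=
    (hO2.inter (isClopen_fib _).2).preimage h.continuous
  have hG : (O1 ∩ (⇑h ⁻¹' (O2 ∩ fib α (blk (h x)))) ∩ fib α (blk x)) ∈ 𝓝 x :=
    ((hO1.inter hN).inter (isClopen_fib _).2).mem_nhds
      ⟨⟨hxO1, hyO2, mem_fib_self _⟩, mem_fib_self x⟩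
  have hxpos : (⟨0, top_limit.pos⟩ : XX α) < x := by
    rw [← Subtype.coe_lt_coe]
    obtain ⟨k, hk, hx1⟩ := hx
    show (0 : Ordinal) < x.1
    rw [hx1]
    exact mul_pos (opow_pos α omega0_pos) (by exact_mod_cast Nat.pos_of_ne_zero hk)
  obtain ⟨l, hl, hIoc⟩ := exists_Ioc_subset_of_mem_nhds hG ⟨_, hxpos⟩
  refine ⟨Set.Ioc l x, isClopen_Ioc' l x, ⟨hl, le_rfl⟩, ?_, ?_, ?_⟩
  · intro u hu; exact (hIoc hu).2
  · intro u hu; exact ((hIoc hu).1.2).2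
  · refine Set.disjoint_left.2 ?_
    rintro a haU ⟨b, hbU, rfl⟩
    exact Set.disjoint_left.1 hdisj (hIoc haU).1.1 ((hIoc hbU).1.2).1

lemma isClopen_iUnion_fib {ι : Type} (V : ι → Set (XX α)) (k : ι → ℕ)
    (hcl : ∀ i, IsClopen (V i)) (hsub : ∀ i, ∀ u ∈ V i, blk u = k i)
    (hfin : ∀ j, {i | k i = j}.Finite) : IsClopen (⋃ i, V i) := by
  constructor
  · rw [← isOpen_compl_iff, isOpen_iff_mem_nhds]
    intro y hy
    have hyn : ∀ i, y ∉ V i := by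
      intro i hi; exact hy (Set.mem_iUnion.2 ⟨i, hi⟩)
    have hopen : IsOpen (fib α (blk y) \ ⋃ i ∈ {i | k i = blk y}, V i) :=
      (isClopen_fib _).2.sdiff ((hfin (blk y)).isClosed_biUnion fun i _ => (hcl i).1)
    refine Filter.mem_of_superset (hopen.mem_nhds ⟨mem_fib_self y, ?_⟩) ?_
    · intro hmem
      obtain ⟨i, -, hi⟩ := Set.mem_iUnion₂.1 hmem
      exact hyn i hi
    · rintro u ⟨hufib, hunot⟩ huA
      obtain ⟨i, hui⟩ := Set.mem_iUnion.1 huA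
      have hki : k i = blk y := by rw [← hsub i u hui]; exact hufib
      exact hunot (Set.mem_iUnion₂.2 ⟨i, hki, hui⟩)
  · exact isOpen_iUnion fun i => (hcl i).2

variable (h : XX α ≃ₜ XX α)

lemma exists_step (hM : {x : XX α | x ∈ maxRank α ∧ h x ≠ x}.Infinite) (F : Finset ℕ) :
    ∃ p : XX α × XX α, (p.1 ∈ maxRank α ∧ h p.1 ≠ p.1) ∧ p.2 ∈ maxRank α ∧
      blk p.1 ∉ F ∧ blk (h p.1) ∉ F ∧ blk p.2 ∉ F ∧
      blk p.2 ≠ blk p.1 ∧ blk p.2 ≠ blk (h p.1) := by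
  classical
  have bad1 : {x : XX α | x ∈ maxRank α ∧ blk x ∈ F}.Finite := by
    refine Set.Finite.subset (F.finite_toSet.image (m α)) ?_
    rintro x ⟨hxM, hxF⟩
    exact ⟨blk x, hxF, (maxRank_eq hxM).symm⟩
  have bad2 : {x : XX α | x ∈ maxRank α ∧ blk (h x) ∈ F}.Finite := by
    refine Set.Finite.subset (F.finite_toSet.biUnion fun j _ => finite_blk_h h j) ?_
    rintro x ⟨hxM, hxF⟩
    exact Set.mem_biUnion hxF ⟨hxM, rfl⟩
  obtain ⟨x, hxM, hxbad⟩ := (hM.diff (bad1.union bad2)).nonempty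
  have hx1 : blk x ∉ F := fun hc => hxbad (Or.inl ⟨hxM.1, hc⟩)
  have hx2 : blk (h x) ∉ F := fun hc => hxbad (Or.inr ⟨hxM.1, hc⟩)
  set G : Finset ℕ := insert (blk x) (insert (blk (h x)) F) with hG
  set j0 : ℕ := G.sup id + 1 with hj0
  have hj0G : j0 ∉ G := by
    intro hmem
    have := Finset.le_sup (f := id) hmem
    simp only [id] at this
    omega
  refine ⟨(x, m α j0), hxM, mem_maxRank_iff.2 ⟨j0, rfl⟩, hx1, hx2, ?_, ?_, ?_⟩
  · rw [blk_m]
    intro hc; exact hj0G (by simp [hG, hc])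
  · rw [blk_m]
    intro hc; exact hj0G (by simp [hG, hc])
  · rw [blk_m]
    intro hc; exact hj0G (by simp [hG, hc])

/-- recursive choice of pairs `(x_n, z_n)` together with the forbidden set used at step `n`. -/
def seq (hM : {x : XX α | x ∈ maxRank α ∧ h x ≠ x}.Infinite) :
    ℕ → Finset ℕ × (XX α × XX α)
  | 0 => (∅, Classical.choose (exists_step h hM ∅))
  | n + 1 =>
    let F := (seq hM n).1 ∪
      {blk (seq hM n).2.1, blk (h (seq hM n).2.1), blk (seq hM n).2.2}
    (F, Classical.choose (exists_step h hM F))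

variable (hM : {x : XX α | x ∈ maxRank α ∧ h x ≠ x}.Infinite)

lemma seq_snd (n : ℕ) :
    (seq h hM n).2 = Classical.choose (exists_step h hM (seq h hM n).1) := by
  cases n <;> rfl

lemma seq_fst_succ (n : ℕ) :
    (seq h hM (n + 1)).1 =
      (seq h hM n).1 ∪ {blk (seq h hM n).2.1, blk (h (seq h hM n).2.1), blk (seq h hM n).2.2} :=
  rfl

lemma seq_spec (n : ℕ) :
    ((seq h hM n).2.1 ∈ maxRank α ∧ h (seq h hM n).2.1 ≠ (seq h hM n).2.1) ∧
      (seq h hM n).2.2 ∈ maxRank α ∧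
      blk (seq h hM n).2.1 ∉ (seq h hM n).1 ∧ blk (h (seq h hM n).2.1) ∉ (seq h hM n).1 ∧
      blk (seq h hM n).2.2 ∉ (seq h hM n).1 ∧
      blk (seq h hM n).2.2 ≠ blk (seq h hM n).2.1 ∧
      blk (seq h hM n).2.2 ≠ blk (h (seq h hM n).2.1) := by
  rw [seq_snd]
  exact Classical.choose_spec (exists_step h hM (seq h hM n).1)

lemma seq_fst_mono {a b : ℕ} (hab : a ≤ b) : (seq h hM a).1 ⊆ (seq h hM b).1 := by
  induction hab with
  | refl => exact Finset.Subset.refl _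
  | step _ ih => exact ih.trans (by rw [seq_fst_succ]; exact Finset.subset_union_left)

lemma new_subset {a b : ℕ} (hab : a < b) :
    ({blk (seq h hM a).2.1, blk (h (seq h hM a).2.1), blk (seq h hM a).2.2} : Finset ℕ) ⊆
      (seq h hM b).1 := by
  have h1 : ({blk (seq h hM a).2.1, blk (h (seq h hM a).2.1), blk (seq h hM a).2.2} : Finset ℕ)
      ⊆ (seq h hM (a + 1)).1 := by
    rw [seq_fst_succ]; exact Finset.subset_union_right
  exact h1.trans (seq_fst_mono h hM hab)

def xs (n : ℕ) : XX α := (seq h hM n).2.1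

def zs (n : ℕ) : XX α := (seq h hM n).2.2

lemma notmem_x (b : ℕ) : blk (xs h hM b) ∉ (seq h hM b).1 := (seq_spec h hM b).2.2.1

lemma notmem_hx (b : ℕ) : blk (h (xs h hM b)) ∉ (seq h hM b).1 := (seq_spec h hM b).2.2.2.1

lemma notmem_z (b : ℕ) : blk (zs h hM b) ∉ (seq h hM b).1 := (seq_spec h hM b).2.2.2.2.1

lemma mem_x {a b : ℕ} (hab : a < b) : blk (xs h hM a) ∈ (seq h hM b).1 :=
  new_subset h hM hab (by simp [xs])

lemma mem_hx {a b : ℕ} (hab : a < b) : blk (h (xs h hM a)) ∈ (seq h hM b).1 :=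
  new_subset h hM hab (by simp [xs])

lemma mem_z {a b : ℕ} (hab : a < b) : blk (zs h hM a) ∈ (seq h hM b).1 :=
  new_subset h hM hab (by simp [xs, zs])

lemma ne_xx {a b : ℕ} (hab : a ≠ b) : blk (xs h hM a) ≠ blk (xs h hM b) := by
  rcases hab.lt_or_gt with hl | hl
  · intro he; exact notmem_x h hM b (he ▸ mem_x h hM hl)
  · intro he; exact notmem_x h hM a (he.symm ▸ mem_x h hM hl)

lemma ne_xh {a b : ℕ} (hab : a ≠ b) : blk (xs h hM a) ≠ blk (h (xs h hM b)) := by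
  rcases hab.lt_or_gt with hl | hl
  · intro he; exact notmem_hx h hM b (he ▸ mem_x h hM hl)
  · intro he; exact notmem_x h hM a (he.symm ▸ mem_hx h hM hl)

lemma ne_hh {a b : ℕ} (hab : a ≠ b) :
    blk (h (xs h hM a)) ≠ blk (h (xs h hM b)) := by
  rcases hab.lt_or_gt with hl | hl
  · intro he; exact notmem_hx h hM b (he ▸ mem_hx h hM hl)
  · intro he; exact notmem_hx h hM a (he.symm ▸ mem_hx h hM hl)

lemma ne_zx (a b : ℕ) : blk (zs h hM a) ≠ blk (xs h hM b) := by
  rcases lt_trichotomy a b with hl | rfl | hl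
  · intro he; exact notmem_x h hM b (he ▸ mem_z h hM hl)
  · exact (seq_spec h hM a).2.2.2.2.2.1
  · intro he; exact notmem_z h hM a (he.symm ▸ mem_x h hM hl)

lemma ne_zh (a b : ℕ) : blk (zs h hM a) ≠ blk (h (xs h hM b)) := by
  rcases lt_trichotomy a b with hl | rfl | hl
  · intro he; exact notmem_hx h hM b (he ▸ mem_z h hM hl)
  · exact (seq_spec h hM a).2.2.2.2.2.2
  · intro he; exact notmem_z h hM a (he.symm ▸ mem_hx h hM hl)

lemma ne_zz {a b : ℕ} (hab : a ≠ b) : blk (zs h hM a) ≠ blk (zs h hM b) := by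
  rcases hab.lt_or_gt with hl | hl
  · intro he; exact notmem_z h hM b (he ▸ mem_z h hM hl)
  · intro he; exact notmem_z h hM a (he.symm ▸ mem_z h hM hl)

lemma xs_maxRank (n : ℕ) : xs h hM n ∈ maxRank α := (seq_spec h hM n).1.1

lemma xs_moved (n : ℕ) : h (xs h hM n) ≠ xs h hM n := (seq_spec h hM n).1.2

lemma zs_maxRank (n : ℕ) : zs h hM n ∈ maxRank α := (seq_spec h hM n).2.1

end St15

open St15 in
/-- If `h` moves infinitely many maximal rank elements of `ω^(α+1)`, then some
moiety `A` satisfies `h(A) ∩ A = ∅` with `A ∪ h(A)` a moiety. -/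
theorem statement15 (α : Ordinal.{0})
    (h : OrdT (Ordinal.omega0 ^ (α + 1)) ≃ₜ OrdT (Ordinal.omega0 ^ (α + 1)))
    (hinf : {x | x ∈ maxRank α ∧ h x ≠ x}.Infinite) :
    ∃ A : Set (OrdT (Ordinal.omega0 ^ (α + 1))), IsMoiety α A ∧
      Disjoint (⇑h '' A) A ∧ IsMoiety α (A ∪ ⇑h '' A) := by
  classical
  have hM : {x : XX α | x ∈ maxRank α ∧ h x ≠ x}.Infinite := hinf
  choose U hUcl hUmem hUblk hUhblk hUdisj using
    fun n : ℕ => exists_U h (xs_maxRank h hM n) (xs_moved h hM n)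
  set A : Set (XX α) := ⋃ n, U n with hAdef
  have himg : ∀ n, ⇑h '' U n = ⇑h.symm ⁻¹' U n := fun n => h.toEquiv.image_eq_preimage_symm (U n)
  have hclimg : ∀ n, IsClopen (⇑h '' U n) := fun n => by
    rw [himg]; exact (hUcl n).preimage h.symm.continuous
  have hfin1 : ∀ j, {n : ℕ | blk (xs h hM n) = j}.Finite := fun j =>
    Set.Subsingleton.finite fun a ha b hb => by
      by_contra hne; exact ne_xx h hM hne (ha.trans hb.symm)
  have hfin2 : ∀ j, {n : ℕ | blk (h (xs h hM n)) = j}.Finite := fun j =>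
    Set.Subsingleton.finite fun a ha b hb => by
      by_contra hne; exact ne_hh h hM hne (ha.trans hb.symm)
  have hAcl : IsClopen A :=
    isClopen_iUnion_fib U (fun n => blk (xs h hM n)) hUcl hUblk hfin1
  have hhA : ⇑h '' A = ⋃ n, ⇑h '' U n := Set.image_iUnion
  have hUnion : A ∪ ⇑h '' A = ⋃ i : ℕ ⊕ ℕ, Sum.elim U (fun n => ⇑h '' U n) i := by
    rw [Set.iUnion_sum, hhA, hAdef]
    rfl
  have hclA2 : IsClopen (A ∪ ⇑h '' A) := by
    rw [hUnion]
    refine isClopen_iUnion_fib _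
      (Sum.elim (fun n => blk (xs h hM n)) (fun n => blk (h (xs h hM n)))) ?_ ?_ ?_
    · rintro (n | n)
      · exact hUcl n
      · exact hclimg n
    · rintro (n | n)
      · exact hUblk n
      · rintro u ⟨v, hv, rfl⟩; exact hUhblk n v hv
    · intro j
      refine Set.Finite.subset (((hfin1 j).image Sum.inl).union ((hfin2 j).image Sum.inr)) ?_
      rintro (n | n) hi
      · exact Or.inl ⟨n, hi, rfl⟩
      · exact Or.inr ⟨n, hi, rfl⟩
  have hdisj : Disjoint (⇑h '' A) A := by
    rw [Set.disjoint_left]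
    rintro y hyh hyA
    rw [hhA] at hyh
    obtain ⟨n, yn⟩ := Set.mem_iUnion.1 hyh
    obtain ⟨m, ym⟩ := Set.mem_iUnion.1 hyA
    by_cases hnm : n = m
    · subst hnm
      exact Set.disjoint_left.1 (hUdisj n) ym yn
    · obtain ⟨v, hv, rfl⟩ := yn
      have e1 : blk (h v) = blk (h (xs h hM n)) := hUhblk n v hv
      have e2 : blk (h v) = blk (xs h hM m) := hUblk m _ ym
      exact ne_xh h hM (Ne.symm hnm) (e2.symm.trans e1)
  have hxsA : ∀ n, xs h hM n ∈ A := fun n => Set.mem_iUnion.2 ⟨n, hUmem n⟩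
  have hxs_inj : Function.Injective (xs h hM) := fun a b he => by
    by_contra hne; exact ne_xx h hM hne (by rw [he])
  have hzs_inj : Function.Injective (zs h hM) := fun a b he => by
    by_contra hne; exact ne_zz h hM hne (by rw [he])
  have hzs_notA : ∀ n, zs h hM n ∉ A := by
    intro n hn
    obtain ⟨i, hi⟩ := Set.mem_iUnion.1 hn
    exact ne_zx h hM n i (hUblk i _ hi)
  have hzs_nothA : ∀ n, zs h hM n ∉ ⇑h '' A := by
    intro n hn
    rw [hhA] at hn
    obtain ⟨i, hi⟩ := Set.mem_iUnion.1 hn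
    obtain ⟨v, hv, hveq⟩ := hi
    exact ne_zh h hM n i (by rw [← hveq]; exact hUhblk i v hv)
  refine ⟨A, ⟨hAcl, ?_, ?_⟩, hdisj, hclA2, ?_, ?_⟩
  · exact Set.infinite_of_injective_forall_mem hxs_inj
      (fun n => ⟨hxsA n, xs_maxRank h hM n⟩)
  · exact Set.infinite_of_injective_forall_mem hzs_inj
      (fun n => ⟨hzs_notA n, zs_maxRank h hM n⟩)
  · exact Set.infinite_of_injective_forall_mem hxs_inj
      (fun n => ⟨Or.inl (hxsA n), xs_maxRank h hM n⟩)
  · exact Set.infinite_of_injective_forall_mem hzs_inj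
      (fun n => ⟨fun hc => hc.elim (hzs_notA n) (hzs_nothA n), zs_maxRank h hM n⟩)
end
end
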